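/- arXiv:1711.08775 — 6 statements merged into one kernel-verified Lean document; each statement's English description precedes it below -/
import Mathlib

section
/- Let a_1, …, a_m be a concave (resp. convex) sequence of vectors in ℤ_{≥0}², and suppose there exists an integer r with i < r < j such that a_r is a corner point of the sequence. Then the inequality a_i + a_j ≥ a_{i−k} + a_{j+k} (resp. a_i + a_j ≤ a_{i−k} + a_{j+k}) is strict for all k ≥ 1 with 1 ≤ i − k and j + k ≤ m; that is, a_i + a_j > a_{i−k} + a_{j+k} (resp. a_i + a_j < a_{i−k} + a_{j+k}). -/
private lemma diff_antitone (m : ℕ) (a : ℕ → ℤ × ℤ)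
    (H : ∀ s, 2 ≤ s → s + 1 ≤ m → a (s - 1) + a (s + 1) ≤ 2 • a s) :
    ∀ s t, 1 ≤ s → s ≤ t → t + 1 ≤ m → a (t + 1) - a t ≤ a (s + 1) - a s := by
  intro s t hs hst
  induction t with
  | zero => omega
  | succ n ih =>
    intro hm
    rcases eq_or_lt_of_le hst with h | h
    · subst h; exact le_refl _
    · have h1 := H (n + 1) (by omega) (by omega)
      simp only [Nat.add_sub_cancel, two_smul] at h1
      have hstep : a (n + 1 + 1) - a (n + 1) ≤ a (n + 1) - a n := by
        rw [sub_le_sub_iff]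
        calc a (n + 1 + 1) + a n = a n + a (n + 1 + 1) := by abel
        _ ≤ a (n + 1) + a (n + 1) := h1
      exact hstep.trans (ih (by omega) (by omega))

private lemma strict_concave (m : ℕ) (a : ℕ → ℤ × ℤ) (i j k r : ℕ)
    (hij : i ≤ j) (hk : 1 ≤ k) (hik : k + 1 ≤ i) (hjk : j + k ≤ m)
    (hir : i < r) (hrj : r < j)
    (hne : a (r - 1) + a (r + 1) ≠ 2 • a r)
    (H : ∀ s, 2 ≤ s → s + 1 ≤ m → a (s - 1) + a (s + 1) ≤ 2 • a s) :
    a (i - k) + a (j + k) < a i + a j := by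
  have hr1 : 2 ≤ r := by omega
  set c : ℤ × ℤ := a r - a (r - 1) with hc
  set c' : ℤ × ℤ := a (r + 1) - a r with hc'
  clear_value c c'
  have hrm : r + 1 ≤ m := by omega
  have hcc : c' ≤ c := by
    have := diff_antitone m a H (r - 1) r (by omega) (by omega) hrm
    have e : r - 1 + 1 = r := by omega
    rw [e] at this
    rw [hc, hc']
    exact this
  have hccne : c' ≠ c := by
    intro h
    rw [hc, hc'] at h
    apply hne
    have h2 : a (r + 1) + a (r - 1) = a r + a r := sub_eq_sub_iff_add_eq_add.mp h
    rw [two_smul]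
    calc a (r - 1) + a (r + 1) = a (r + 1) + a (r - 1) := by abel
      _ = a r + a r := h2
  have hpos' : 0 < c - c' := sub_pos.mpr (lt_of_le_of_ne hcc hccne)
  have LA : ∀ n, n + 1 ≤ i → a (i - n) + n • c ≤ a i := by
    intro n
    induction n with
    | zero => intro _; simp
    | succ n ih =>
      intro hn
      have e1 : i - (n + 1) + 1 = i - n := by omega
      have hd : c ≤ a (i - (n + 1) + 1) - a (i - (n + 1)) := by
        have := diff_antitone m a H (i - (n + 1)) (r - 1) (by omega) (by omega)
          (by omega)
        have e : r - 1 + 1 = r := by omega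
        rw [e] at this
        rw [hc]
        exact this
      have e2 : a (i - (n + 1)) + (n + 1) • c
          = (a (i - (n + 1)) + c) + n • c := by
        rw [succ_nsmul]; abel
      rw [e2]
      calc (a (i - (n + 1)) + c) + n • c
          ≤ (a (i - (n + 1)) + (a (i - (n + 1) + 1) - a (i - (n + 1)))) + n • c :=
            add_le_add_left (add_le_add_right hd _) _
        _ = a (i - n) + n • c := by rw [e1]; abel
        _ ≤ a i := ih (by omega)
  have LB : ∀ n, j + n ≤ m → a (j + n) ≤ a j + n • c' := by
    intro n
    induction n with
    | zero => intro _; simp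
    | succ n ih =>
      intro hn
      have hd : a (j + n + 1) - a (j + n) ≤ c' := by
        rw [hc']
        exact diff_antitone m a H r (j + n) (by omega) (by omega) (by omega)
      have e : j + (n + 1) = j + n + 1 := by omega
      rw [e]
      calc a (j + n + 1) = a (j + n) + (a (j + n + 1) - a (j + n)) := by abel
        _ ≤ (a j + n • c') + c' := add_le_add (ih (by omega)) hd
        _ = a j + (n + 1) • c' := by rw [succ_nsmul]; abel
  have hA := LA k (by omega)
  have hB := LB k (by omega)
  have hkpos : 0 < k • (c - c') := by
    obtain ⟨n, rfl⟩ : ∃ n, k = n + 1 := ⟨k - 1, by omega⟩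
    have h0 : (0 : ℤ × ℤ) ≤ n • (c - c') := nsmul_nonneg hpos'.le _
    rw [succ_nsmul]
    calc (0 : ℤ × ℤ) < c - c' := hpos'
      _ ≤ n • (c - c') + (c - c') := le_add_of_nonneg_left h0
  have h1 : a (i - k) ≤ a i - k • c := le_sub_iff_add_le.mpr hA
  calc a (i - k) + a (j + k) ≤ (a i - k • c) + (a j + k • c') := add_le_add h1 hB
    _ = a i + a j - k • (c - c') := by rw [smul_sub]; abel
    _ < a i + a j := sub_lt_self _ hkpos

/-- `a r` is a corner point of the sequence `a 1, …, a m`: either `r = 1`, or `r = m`,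
or the concavity/convexity inequality at `r` is strict, which (for a concave, resp.
convex, sequence) is equivalent to `a (r-1) + a (r+1) ≠ 2 • a r`. -/
def IsCornerPt (m : ℕ) (a : ℕ → ℤ × ℤ) (r : ℕ) : Prop :=
  r = 1 ∨ r = m ∨ a (r - 1) + a (r + 1) ≠ 2 • a r

/-- **Lemma 1.1 (c).** Let `a 1, …, a m` be a concave (resp. convex) sequence of vectors
in `ℤ_{≥0}²` and suppose that there is `r` with `i < r < j` such that `a r` is a corner
point of the sequence.  Then for all `k ≥ 1` with `1 ≤ i - k` and `j + k ≤ m` the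
inequality of Lemma 1.1 is strict: `a (i-k) + a (j+k) < a i + a j`
(resp. `a i + a j < a (i-k) + a (j+k)`), where `<` is the strict componentwise order
(`u < v` iff `u ≤ v` and `u ≠ v`). -/
theorem stmt_1 (m : ℕ) (a : ℕ → ℤ × ℤ)
    (hpos : ∀ i, 1 ≤ i → i ≤ m → 0 ≤ a i)
    (i j k : ℕ) (hij : i ≤ j) (hk : 1 ≤ k) (hik : k + 1 ≤ i) (hjk : j + k ≤ m)
    (hcorner : ∃ r, i < r ∧ r < j ∧ IsCornerPt m a r) :
    ((∀ r, 2 ≤ r → r + 1 ≤ m → a (r - 1) + a (r + 1) ≤ 2 • a r) →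
        a (i - k) + a (j + k) < a i + a j) ∧
    ((∀ r, 2 ≤ r → r + 1 ≤ m → 2 • a r ≤ a (r - 1) + a (r + 1)) →
        a i + a j < a (i - k) + a (j + k)) := by
  obtain ⟨r, hir, hrj, hcp⟩ := hcorner
  have hne : a (r - 1) + a (r + 1) ≠ 2 • a r := by
    rcases hcp with h | h | h
    · omega
    · omega
    · exact h
  constructor
  · intro H
    exact strict_concave m a i j k r hij hk hik hjk hir hrj hne H
  · intro H
    set b : ℕ → ℤ × ℤ := fun t => -a t with hb
    have hne' : b (r - 1) + b (r + 1) ≠ 2 • b r := by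
      simp only [hb]
      intro h
      rw [smul_neg, ← neg_add, neg_inj] at h
      exact hne h
    have H' : ∀ s, 2 ≤ s → s + 1 ≤ m → b (s - 1) + b (s + 1) ≤ 2 • b s := by
      intro s hs hsm
      simp only [hb]
      rw [smul_neg, ← neg_add]
      exact neg_le_neg (H s hs hsm)
    have := strict_concave m b i j k r hij hk hik hjk hir hrj hne' H'
    simp only [hb] at this
    rw [← neg_add, ← neg_add, neg_lt_neg_iff] at this
    exact this
end

section
/- Let I ⊂ K[x,y] be a concave monomial ideal of height 2 with minimal monomial generators u_1 > … > u_m, and let J = (u_1, u_m) (so J = (x^{a_1}, y^{b_m})). Then I^k = J^{k−1}I = JI^{k−1} for all k ≥ 2. -/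
open MvPolynomial Pointwise

/-- **Proposition 2.1(a).** Let `I ⊆ K[x,y]` be a concave monomial ideal of height 2,
with minimal monomial generators `u i = x^(a i) * y^(b i)`, `i = 1, …, m`, ordered
lexicographically (so `a` is strictly decreasing, `b` strictly increasing, and
`a m = b 1 = 0`), and let `J = (u 1, u m)`.  Then `I^k = J^(k-1) * I = J * I^(k-1)`
for all `k ≥ 2`. -/
theorem stmt_3 (K : Type) [Field K] (m : ℕ) (hm : 2 ≤ m) (a b : ℕ → ℕ)
    (hmono : ∀ i, 1 ≤ i → i + 1 ≤ m → a (i + 1) < a i ∧ b i < b (i + 1))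
    (ham : a m = 0) (hb1 : b 1 = 0)
    (hconc : ∀ i, 2 ≤ i → i + 1 ≤ m →
      a (i - 1) + a (i + 1) ≤ 2 * a i ∧ b (i - 1) + b (i + 1) ≤ 2 * b i)
    (I J : Ideal (MvPolynomial (Fin 2) K))
    (hI : I = Ideal.span ((fun i => X 0 ^ a i * X 1 ^ b i) '' Set.Icc 1 m))
    (hJ : J = Ideal.span {X 0 ^ a 1 * X 1 ^ b 1, X 0 ^ a m * X 1 ^ b m}) :
    ∀ k, 2 ≤ k → I ^ k = J ^ (k - 1) * I ∧ I ^ k = J * I ^ (k - 1) := by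
    -- pairwise concavity inequality
  have pairA : ∀ (f : ℕ → ℕ), (∀ i, 2 ≤ i → i + 1 ≤ m → f (i-1) + f (i+1) ≤ 2 * f i) →
      ∀ r s, 1 ≤ s → s + r + 1 ≤ m → f s + f (s + r + 1) ≤ f (s + 1) + f (s + r) := by
    intro f hf r
    induction r with
    | zero =>
      intro s h1 h2
      simp only [Nat.add_zero]
      exact Nat.le_of_eq (Nat.add_comm _ _)
    | succ r ih =>
      intro s h1 h2
      have h3 := ih s h1 (by omega)
      have h4 := hf (s + r + 1) (by omega) (by omega)
      have e : s + r + 1 - 1 = s + r := by omega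
      rw [e] at h4
      have e2 : s + (r+1) = s + r + 1 := by omega
      rw [e2]
      omega
  have spread : ∀ (f : ℕ → ℕ), (∀ i, 2 ≤ i → i + 1 ≤ m → f (i-1) + f (i+1) ≤ 2 * f i) →
      ∀ q s j, 1 ≤ s → s + q ≤ j → j + q ≤ m → f s + f (j + q) ≤ f (s + q) + f j := by
    intro f hf q
    induction q with
    | zero => intro s j h1 h2 h3; simp
    | succ q ih =>
      intro s j h1 h2 h3
      have h4 := ih s (j+1) h1 (by omega) (by omega)
      have h5 : f (s + q) + f (j + 1) ≤ f (s + q + 1) + f j := by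
        have h6 := pairA f hf (j - (s+q)) (s+q) (by omega) (by omega)
        have e : s + q + (j - (s + q)) = j := by omega
        rw [e] at h6
        omega
      have e2 : j + (q+1) = j + 1 + q := by omega
      have e3 : s + (q+1) = s + q + 1 := by omega
      rw [e2, e3]
      omega
  have key : ∀ i j, 1 ≤ i → i ≤ j → j ≤ m →
      (X 0 ^ a i * X 1 ^ b i : MvPolynomial (Fin 2) K) * (X 0 ^ a j * X 1 ^ b j) ∈ J * I := by
    intro i j hi hij hjm
    by_cases hcase : i + j ≤ m + 1
    · set s := i + j - 1 with hs
      have hs1 : 1 ≤ s := by omega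
      have hsm : s ≤ m := by omega
      have hA : a 1 + a s ≤ a i + a j := by
        have h6 := spread a (fun i h1 h2 => (hconc i h1 h2).1) (i-1) 1 j (by omega) (by omega) (by omega)
        have e1 : j + (i-1) = s := by omega
        have e2 : 1 + (i-1) = i := by omega
        rw [e1, e2] at h6; omega
      have hB : b 1 + b s ≤ b i + b j := by
        have h6 := spread b (fun i h1 h2 => (hconc i h1 h2).2) (i-1) 1 j (by omega) (by omega) (by omega)
        have e1 : j + (i-1) = s := by omega
        have e2 : 1 + (i-1) = i := by omega
        rw [e1, e2] at h6; omega
      obtain ⟨p, hp⟩ := Nat.le.dest hA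
      obtain ⟨q, hq⟩ := Nat.le.dest hB
      have heq : (X 0 ^ a i * X 1 ^ b i : MvPolynomial (Fin 2) K) * (X 0 ^ a j * X 1 ^ b j)
          = (X 0 ^ p * X 1 ^ q) * ((X 0 ^ a 1 * X 1 ^ b 1) * (X 0 ^ a s * X 1 ^ b s)) := by
        have L : (X 0 ^ a i * X 1 ^ b i : MvPolynomial (Fin 2) K) * (X 0 ^ a j * X 1 ^ b j)
            = X 0 ^ (a i + a j) * X 1 ^ (b i + b j) := by
          rw [pow_add, pow_add]; ring
        have R : ((X 0 ^ p * X 1 ^ q : MvPolynomial (Fin 2) K)) * ((X 0 ^ a 1 * X 1 ^ b 1) * (X 0 ^ a s * X 1 ^ b s))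
            = X 0 ^ (p + (a 1 + a s)) * X 1 ^ (q + (b 1 + b s)) := by
          rw [pow_add, pow_add, pow_add, pow_add]; ring
        rw [L, R, show a i + a j = p + (a 1 + a s) from by omega,
          show b i + b j = q + (b 1 + b s) from by omega]
      rw [heq]
      refine Ideal.mul_mem_left _ _ (Ideal.mul_mem_mul ?_ ?_)
      · rw [hJ]; exact Ideal.subset_span (Set.mem_insert _ _)
      · rw [hI]; exact Ideal.subset_span ⟨s, ⟨hs1, hsm⟩, rfl⟩
    · set s := i + j - m with hs
      have hs1 : 1 ≤ s := by omega
      have hsm : s ≤ m := by omega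
      have hA : a s + a m ≤ a i + a j := by
        have h6 := spread a (fun i h1 h2 => (hconc i h1 h2).1) (m-j) s j (by omega) (by omega) (by omega)
        have e1 : j + (m-j) = m := by omega
        have e2 : s + (m-j) = i := by omega
        rw [e1, e2] at h6; omega
      have hB : b s + b m ≤ b i + b j := by
        have h6 := spread b (fun i h1 h2 => (hconc i h1 h2).2) (m-j) s j (by omega) (by omega) (by omega)
        have e1 : j + (m-j) = m := by omega
        have e2 : s + (m-j) = i := by omega
        rw [e1, e2] at h6; omega
      obtain ⟨p, hp⟩ := Nat.le.dest hA
      obtain ⟨q, hq⟩ := Nat.le.dest hB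
      have heq : (X 0 ^ a i * X 1 ^ b i : MvPolynomial (Fin 2) K) * (X 0 ^ a j * X 1 ^ b j)
          = (X 0 ^ p * X 1 ^ q) * ((X 0 ^ a m * X 1 ^ b m) * (X 0 ^ a s * X 1 ^ b s)) := by
        have L : (X 0 ^ a i * X 1 ^ b i : MvPolynomial (Fin 2) K) * (X 0 ^ a j * X 1 ^ b j)
            = X 0 ^ (a i + a j) * X 1 ^ (b i + b j) := by
          rw [pow_add, pow_add]; ring
        have R : ((X 0 ^ p * X 1 ^ q : MvPolynomial (Fin 2) K)) * ((X 0 ^ a m * X 1 ^ b m) * (X 0 ^ a s * X 1 ^ b s))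
            = X 0 ^ (p + (a m + a s)) * X 1 ^ (q + (b m + b s)) := by
          rw [pow_add, pow_add, pow_add, pow_add]; ring
        rw [L, R, show a i + a j = p + (a m + a s) from by omega,
          show b i + b j = q + (b m + b s) from by omega]
      rw [heq]
      refine Ideal.mul_mem_left _ _ (Ideal.mul_mem_mul ?_ ?_)
      · rw [hJ]; exact Ideal.subset_span (Set.mem_insert_of_mem _ rfl)
      · rw [hI]; exact Ideal.subset_span ⟨s, ⟨hs1, hsm⟩, rfl⟩
  have hJI : J ≤ I := by
    rw [hI, hJ]
    apply Ideal.span_le.mpr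
    intro x hx
    simp only [Set.mem_insert_iff, Set.mem_singleton_iff] at hx
    rcases hx with rfl | rfl
    · exact Ideal.subset_span ⟨1, ⟨le_refl 1, by omega⟩, rfl⟩
    · exact Ideal.subset_span ⟨m, ⟨by omega, le_refl m⟩, rfl⟩
  have hsq : I * I = J * I := by
    apply le_antisymm
    · have hS : ∃ S : Set (MvPolynomial (Fin 2) K),
          S = (fun i => X 0 ^ a i * X 1 ^ b i) '' Set.Icc 1 m := ⟨_, rfl⟩
      obtain ⟨S, hS⟩ := hS
      have h7 : I * I = Ideal.span (S * S) := by
        rw [hI, ← hS, Ideal.span_mul_span']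
      rw [h7]
      apply Ideal.span_le.mpr
      rintro x hx
      rw [Set.mem_mul] at hx
      obtain ⟨y, hy, z, hz, rfl⟩ := hx
      rw [hS] at hy hz
      obtain ⟨i, hi, rfl⟩ := hy
      obtain ⟨j, hj, rfl⟩ := hz
      rcases le_total i j with h | h
      · exact key i j hi.1 h hj.2
      · have h9 := key j i hj.1 h hi.2
        rwa [mul_comm ((X 0 : MvPolynomial (Fin 2) K) ^ a j * X 1 ^ b j)] at h9
    · exact Ideal.mul_mono_left hJI
  have hpow : ∀ n, I ^ (n + 1) = J ^ n * I := by
    intro n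
    induction n with
    | zero => simp
    | succ n ih =>
      rw [pow_succ, ih, pow_succ, mul_assoc, hsq, ← mul_assoc]
  intro k hk
  obtain ⟨n, rfl⟩ : ∃ n, k = n + 1 := ⟨k - 1, by omega⟩
  have e : n + 1 - 1 = n := rfl
  rw [e]
  refine ⟨hpow n, ?_⟩
  rw [hpow n]
  obtain ⟨p, rfl⟩ : ∃ p, n = p + 1 := ⟨n - 1, by omega⟩
  rw [hpow p, ← mul_assoc, ← pow_succ']
end

section
/- Let I ⊂ K[x,y] be a concave monomial ideal of height 2 with μ(I) = m minimal monomial generators u_1 > … > u_m. Then for every k ≥ 1 the set {u_1^k, u_1^{k−1}u_2, …, u_1^{k−1}u_m} ∪ ⋃_{i=2}^{k} {u_1^{k−i}u_m^{i−1}u_2, …, u_1^{k−i}u_m^{i−1}u_m} is the minimal monomial generating set of I^k; in particular μ(I^k) = (m−1)k + 1 for all k ≥ 0. -/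
open MvPolynomial

noncomputable section

/-- The minimal number of generators `μ(J)` of an ideal `J`. -/
def muGen {R : Type*} [CommSemiring R] (J : Ideal R) : ℕ :=
  sInf {n : ℕ | ∃ T : Finset R, T.card = n ∧ Ideal.span (T : Set R) = J}

/-- The set `{u 1 ^ k, u 1 ^ (k-1) * u 2, …, u 1 ^ (k-1) * u m} ∪
⋃_{i=2}^{k} {u 1 ^ (k-i) * u m ^ (i-1) * u j : j = 2, …, m}`, where
`u i = x^(a i) * y^(b i)`. -/
def genSet (K : Type) [Field K] (a b : ℕ → ℕ) (m k : ℕ) : Set (MvPolynomial (Fin 2) K) :=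
  {w | ∃ i j, 1 ≤ i ∧ i ≤ k ∧ 1 ≤ j ∧ j ≤ m ∧ (i = 1 ∨ 2 ≤ j) ∧
    w = (X 0 ^ a 1 * X 1 ^ b 1) ^ (k - i) * (X 0 ^ a m * X 1 ^ b m) ^ (i - 1) *
        (X 0 ^ a j * X 1 ^ b j)}

namespace StmtAux

def E (p q : ℕ) : Fin 2 →₀ ℕ := Finsupp.single 0 p + Finsupp.single 1 q

lemma E_apply0 (p q : ℕ) : E p q 0 = p := by simp [E]
lemma E_apply1 (p q : ℕ) : E p q 1 = q := by simp [E, Finsupp.single_apply]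

lemma E_le_iff {p q p' q' : ℕ} : E p q ≤ E p' q' ↔ p ≤ p' ∧ q ≤ q' := by
  constructor
  · intro h
    exact ⟨by simpa [E_apply0] using h 0, by simpa [E_apply1] using h 1⟩
  · intro ⟨h1, h2⟩ i
    fin_cases i <;> simpa [E_apply0, E_apply1]

lemma E_inj {p q p' q' : ℕ} (h : E p q = E p' q') : p = p' ∧ q = q' := by
  constructor
  · have := congrArg (fun f => f 0) h; simpa [E_apply0] using this
  · have := congrArg (fun f => f 1) h; simpa [E_apply1] using this

variable {K : Type} [Field K]

lemma M_eq (p q : ℕ) : (X 0 ^ p * X 1 ^ q : MvPolynomial (Fin 2) K) = monomial (E p q) 1 := by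
  rw [X_pow_eq_monomial, X_pow_eq_monomial, monomial_mul, one_mul, E]

lemma M_mul (p q p' q' : ℕ) :
    (X 0 ^ p * X 1 ^ q) * (X 0 ^ p' * X 1 ^ q' : MvPolynomial (Fin 2) K)
      = X 0 ^ (p + p') * X 1 ^ (q + q') := by
  rw [pow_add, pow_add]; ring

lemma M_pow (p q n : ℕ) :
    ((X 0 ^ p * X 1 ^ q : MvPolynomial (Fin 2) K)) ^ n = X 0 ^ (n * p) * X 1 ^ (n * q) := by
  rw [mul_pow, ← pow_mul, ← pow_mul, mul_comm p n, mul_comm q n]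

lemma M_dvd {p q p' q' : ℕ} (h1 : p ≤ p') (h2 : q ≤ q') :
    (X 0 ^ p * X 1 ^ q : MvPolynomial (Fin 2) K) ∣ X 0 ^ p' * X 1 ^ q' := by
  refine ⟨X 0 ^ (p' - p) * X 1 ^ (q' - q), ?_⟩
  rw [M_mul, Nat.add_sub_cancel' h1, Nat.add_sub_cancel' h2]

def Pe (a : ℕ → ℕ) (m k i j : ℕ) : ℕ := (k - i) * a 1 + (i - 1) * a m + a j

def idx (m k : ℕ) : Finset (ℕ × ℕ) :=
  (Finset.Icc 1 k ×ˢ Finset.Icc 1 m).filter fun p => p.1 = 1 ∨ 2 ≤ p.2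

lemma mem_idx {m k : ℕ} {p : ℕ × ℕ} :
    p ∈ idx m k ↔ 1 ≤ p.1 ∧ p.1 ≤ k ∧ 1 ≤ p.2 ∧ p.2 ≤ m ∧ (p.1 = 1 ∨ 2 ≤ p.2) := by
  simp [idx, Finset.mem_filter, Finset.mem_product]; tauto

variable (a b : ℕ → ℕ) (m k : ℕ)

def Eexp (p : ℕ × ℕ) : Fin 2 →₀ ℕ := E (Pe a m k p.1 p.2) (Pe b m k p.1 p.2)

def SF : Finset (Fin 2 →₀ ℕ) := (idx m k).image (Eexp a b m k)

open Classical in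
def genF : Finset (MvPolynomial (Fin 2) K) :=
  (SF a b m k).image (fun e => monomial e (1 : K))

lemma elt_eq (i j : ℕ) :
    (X 0 ^ a 1 * X 1 ^ b 1) ^ (k - i) * (X 0 ^ a m * X 1 ^ b m) ^ (i - 1) *
      (X 0 ^ a j * X 1 ^ b j)
    = (monomial (E (Pe a m k i j) (Pe b m k i j)) (1 : K)) := by
  rw [M_pow, M_pow, M_mul, M_mul, M_eq, Pe, Pe]

lemma genSet_eq_coe : genSet K a b m k = ↑(genF a b m k (K := K)) := by
  ext w
  simp only [genSet, Set.mem_setOf_eq, genF, SF, Finset.coe_image, Set.mem_image,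
    Finset.mem_coe, Finset.mem_image]
  constructor
  · rintro ⟨i, j, h1, h2, h3, h4, h5, rfl⟩
    exact ⟨Eexp a b m k (i, j), ⟨(i, j), mem_idx.2 ⟨h1, h2, h3, h4, h5⟩, rfl⟩,
      (elt_eq a b m k i j).symm⟩
  · rintro ⟨e, ⟨⟨i, j⟩, hp, rfl⟩, rfl⟩
    rw [mem_idx] at hp
    exact ⟨i, j, hp.1, hp.2.1, hp.2.2.1, hp.2.2.2.1, hp.2.2.2.2, (elt_eq a b m k i j).symm⟩

open Classical in
lemma genF_coe_eq :
    (↑(genF a b m k (K := K)) : Set (MvPolynomial (Fin 2) K))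
      = (fun e => monomial e (1 : K)) '' ↑(SF a b m k) := by
  rw [genF, Finset.coe_image]

section Span
variable {m : ℕ} {a b : ℕ → ℕ}

lemma concave_step {f : ℕ → ℕ} (hc : ∀ i, 2 ≤ i → i + 1 ≤ m → f (i - 1) + f (i + 1) ≤ 2 * f i)
    {p q : ℕ} (hp : 1 ≤ p) (hpq : p ≤ q) (hq : q + 1 ≤ m) :
    f (q + 1) + f p ≤ f q + f (p + 1) := by
  induction q, hpq using Nat.le_induction with
  | base => omega
  | succ q hq' ih =>
    have h1 := hc (q + 1) (by omega) (by omega)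
    have h2 : q + 1 - 1 = q := by omega
    rw [h2] at h1
    have := ih (by omega)
    omega

lemma concave_superadd' {f : ℕ → ℕ}
    (hc : ∀ i, 2 ≤ i → i + 1 ≤ m → f (i - 1) + f (i + 1) ≤ 2 * f i) :
    ∀ i j, 1 ≤ i → i ≤ j → i + j ≤ m + 1 → f 1 + f (i + j - 1) ≤ f i + f j := by
  intro i
  induction i with
  | zero => omega
  | succ i ih =>
    intro j h1 hij hmm
    rcases Nat.eq_or_lt_of_le h1 with h | h
    · have e : 1 + j - 1 = j := by omega
      rw [← h, e]
    · have hi1 : 1 ≤ i := by omega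
      have e1 : i + (j + 1) - 1 = i + 1 + j - 1 := by omega
      have h2 := ih (j + 1) hi1 (by omega) (by omega)
      rw [e1] at h2
      have h3 := concave_step hc hi1 (by omega : i ≤ j) (by omega)
      omega

lemma concave_superadd {f : ℕ → ℕ}
    (hc : ∀ i, 2 ≤ i → i + 1 ≤ m → f (i - 1) + f (i + 1) ≤ 2 * f i)
    {i j : ℕ} (hi : 1 ≤ i) (hj : 1 ≤ j) (hmm : i + j ≤ m + 1) :
    f 1 + f (i + j - 1) ≤ f i + f j := by
  rcases le_total i j with h | h
  · exact concave_superadd' hc i j hi h hmm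
  · have := concave_superadd' hc j i hj h (by omega)
    rw [show j + i - 1 = i + j - 1 by omega] at this
    omega

lemma concave_superadd_right {f : ℕ → ℕ}
    (hc : ∀ i, 2 ≤ i → i + 1 ≤ m → f (i - 1) + f (i + 1) ≤ 2 * f i)
    {i j : ℕ} (hi : i ≤ m) (hj : j ≤ m) (hmm : m + 1 ≤ i + j) :
    f m + f (i + j - m) ≤ f i + f j := by
  set g : ℕ → ℕ := fun t => f (m + 1 - t) with hg
  have hgc : ∀ i, 2 ≤ i → i + 1 ≤ m → g (i - 1) + g (i + 1) ≤ 2 * g i := by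
    intro i h2 him
    have := hc (m + 1 - i) (by omega) (by omega)
    simp only [hg]
    rw [show m + 1 - (i - 1) = (m + 1 - i) + 1 by omega,
        show m + 1 - (i + 1) = (m + 1 - i) - 1 by omega]
    omega
  have h1 : 1 ≤ m + 1 - i := by omega
  have h2 : 1 ≤ m + 1 - j := by omega
  have h3 := concave_superadd hgc h1 h2 (by omega)
  simp only [hg] at h3
  rw [show m + 1 - 1 = m by omega,
      show m + 1 - ((m + 1 - i) + (m + 1 - j) - 1) = i + j - m by omega,
      show m + 1 - (m + 1 - i) = i by omega,
      show m + 1 - (m + 1 - j) = j by omega] at h3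
  exact h3

variable {K : Type} [Field K] {I : Ideal (MvPolynomial (Fin 2) K)}

lemma u_mem_I (hI : I = Ideal.span ((fun i => X 0 ^ a i * X 1 ^ b i) '' Set.Icc 1 m))
    {j : ℕ} (hj1 : 1 ≤ j) (hjm : j ≤ m) : X 0 ^ a j * X 1 ^ b j ∈ I := by
  rw [hI]
  exact Ideal.subset_span ⟨j, ⟨hj1, hjm⟩, rfl⟩

lemma genSet_subset_pow (hI : I = Ideal.span ((fun i => X 0 ^ a i * X 1 ^ b i) '' Set.Icc 1 m))
    {k : ℕ} (hk : 1 ≤ k) : genSet K a b m k ⊆ (I ^ k : Ideal _) := by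
  rintro w ⟨i, j, h1, h2, h3, h4, h5, rfl⟩
  have hu1 : (X 0 ^ a 1 * X 1 ^ b 1 : MvPolynomial (Fin 2) K) ∈ I := u_mem_I hI le_rfl (by omega)
  have hum : (X 0 ^ a m * X 1 ^ b m : MvPolynomial (Fin 2) K) ∈ I := u_mem_I hI (by omega) le_rfl
  have huj : (X 0 ^ a j * X 1 ^ b j : MvPolynomial (Fin 2) K) ∈ I := u_mem_I hI h3 h4
  have hmem : (X 0 ^ a 1 * X 1 ^ b 1) ^ (k - i) * (X 0 ^ a m * X 1 ^ b m) ^ (i - 1) *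
      (X 0 ^ a j * X 1 ^ b j) ∈ I ^ (k - i) * I ^ (i - 1) * I ^ 1 :=
    Ideal.mul_mem_mul (Ideal.mul_mem_mul (Ideal.pow_mem_pow hu1 _) (Ideal.pow_mem_pow hum _))
      (by simpa using huj)
  rwa [← pow_add, ← pow_add, show k - i + (i - 1) + 1 = k by omega] at hmem

lemma genSet_one : genSet K a b m 1 = (fun i => X 0 ^ a i * X 1 ^ b i) '' Set.Icc 1 m := by
  ext w
  simp only [genSet, Set.mem_setOf_eq, Set.mem_image, Set.mem_Icc]
  constructor
  · rintro ⟨i, j, h1, h2, h3, h4, h5, rfl⟩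
    have : i = 1 := by omega
    subst this
    exact ⟨j, ⟨h3, h4⟩, by simp⟩
  · rintro ⟨j, ⟨h1, h2⟩, rfl⟩
    exact ⟨1, j, le_rfl, le_rfl, h1, h2, Or.inl rfl, by simp⟩

lemma span_genSet (hm : 2 ≤ m)
    (hmono : ∀ i, 1 ≤ i → i + 1 ≤ m → a (i + 1) < a i ∧ b i < b (i + 1))
    (hconc : ∀ i, 2 ≤ i → i + 1 ≤ m →
      a (i - 1) + a (i + 1) ≤ 2 * a i ∧ b (i - 1) + b (i + 1) ≤ 2 * b i)
    (hI : I = Ideal.span ((fun i => X 0 ^ a i * X 1 ^ b i) '' Set.Icc 1 m))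
    {k : ℕ} (hk : 1 ≤ k) : Ideal.span (genSet K a b m k) = I ^ k := by
  have hca : ∀ i, 2 ≤ i → i + 1 ≤ m → a (i - 1) + a (i + 1) ≤ 2 * a i :=
    fun i h1 h2 => (hconc i h1 h2).1
  have hcb : ∀ i, 2 ≤ i → i + 1 ≤ m → b (i - 1) + b (i + 1) ≤ 2 * b i :=
    fun i h1 h2 => (hconc i h1 h2).2
  induction k, hk using Nat.le_induction with
  | base => rw [genSet_one, ← hI, pow_one]
  | succ k hk ih =>
    apply le_antisymm
    · rw [Ideal.span_le]
      exact genSet_subset_pow hI (by omega)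
    · rw [pow_succ, ← ih, hI, Ideal.span_mul_span', Ideal.span_le]
      rintro w hw
      rw [Set.mem_mul] at hw
      obtain ⟨v, hv, u, hu, rfl⟩ := hw
      obtain ⟨s, j, hs1, hsk, hj1, hjm, hcon, rfl⟩ := hv
      obtain ⟨i, ⟨hi1, him⟩, rfl⟩ := hu
      -- rewrite the product in M-form
      rw [elt_eq, ← M_eq, M_mul]
      set P := Pe a m k s j
      set Q := Pe b m k s j
      rcases le_or_gt (i + j) (m + 1) with hcase | hcase
      · -- target index (s, i+j-1) in genSet (k+1)
        have ht : (X 0 ^ a 1 * X 1 ^ b 1) ^ (k + 1 - s) * (X 0 ^ a m * X 1 ^ b m) ^ (s - 1) *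
            (X 0 ^ a (i + j - 1) * X 1 ^ b (i + j - 1)) ∈ genSet K a b m (k + 1) :=
          ⟨s, i + j - 1, hs1, by omega, by omega, by omega, by omega, rfl⟩
        have hdvd : (X 0 ^ a 1 * X 1 ^ b 1 : MvPolynomial (Fin 2) K) ^ (k + 1 - s) * (X 0 ^ a m * X 1 ^ b m) ^ (s - 1) *
            (X 0 ^ a (i + j - 1) * X 1 ^ b (i + j - 1))
            ∣ X 0 ^ (P + a i) * X 1 ^ (Q + b i) := by
          rw [elt_eq, ← M_eq]
          apply M_dvd
          · have e1 : (k + 1 - s) * a 1 = (k - s) * a 1 + a 1 := by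
              rw [show k + 1 - s = (k - s) + 1 by omega, add_mul, one_mul]
            have sa := concave_superadd hca hi1 hj1 hcase
            simp only [Pe, P]
            omega
          · have e1 : (k + 1 - s) * b 1 = (k - s) * b 1 + b 1 := by
              rw [show k + 1 - s = (k - s) + 1 by omega, add_mul, one_mul]
            have sb := concave_superadd hcb hi1 hj1 hcase
            simp only [Pe, Q]
            omega
        obtain ⟨c, hc⟩ := hdvd
        rw [hc, mul_comm]
        exact Ideal.mul_mem_left _ c (Ideal.subset_span ht)
      · -- target index (s+1, i+j-m) in genSet (k+1)
        have ht : (X 0 ^ a 1 * X 1 ^ b 1) ^ (k + 1 - (s + 1)) * (X 0 ^ a m * X 1 ^ b m) ^ (s + 1 - 1) *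
            (X 0 ^ a (i + j - m) * X 1 ^ b (i + j - m)) ∈ genSet K a b m (k + 1) :=
          ⟨s + 1, i + j - m, by omega, by omega, by omega, by omega, by omega, rfl⟩
        have hdvd : (X 0 ^ a 1 * X 1 ^ b 1 : MvPolynomial (Fin 2) K) ^ (k + 1 - (s + 1)) * (X 0 ^ a m * X 1 ^ b m) ^ (s + 1 - 1) *
            (X 0 ^ a (i + j - m) * X 1 ^ b (i + j - m))
            ∣ X 0 ^ (P + a i) * X 1 ^ (Q + b i) := by
          rw [elt_eq, ← M_eq]
          apply M_dvd
          · have e1 : (s + 1 - 1) * a m = (s - 1) * a m + a m := by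
              rw [show s + 1 - 1 = (s - 1) + 1 by omega, add_mul, one_mul]
            have e2 : k + 1 - (s + 1) = k - s := by omega
            have sa := concave_superadd_right hca him hjm (by omega)
            simp only [Pe, P, e2]
            omega
          · have e1 : (s + 1 - 1) * b m = (s - 1) * b m + b m := by
              rw [show s + 1 - 1 = (s - 1) + 1 by omega, add_mul, one_mul]
            have e2 : k + 1 - (s + 1) = k - s := by omega
            have sb := concave_superadd_right hcb him hjm (by omega)
            simp only [Pe, Q, e2]
            omega
        obtain ⟨c, hc⟩ := hdvd
        rw [hc, mul_comm]
        exact Ideal.mul_mem_left _ c (Ideal.subset_span ht)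

end Span

section Min
variable {K : Type} [Field K] {m : ℕ} {a b : ℕ → ℕ}

lemma strict_anti_of {f : ℕ → ℕ} (h : ∀ i, 1 ≤ i → i + 1 ≤ m → f (i + 1) < f i) :
    ∀ i j, 1 ≤ i → i ≤ j → j ≤ m → f j ≤ f i ∧ (i < j → f j < f i) := by
  intro i j hi hij hjm
  induction j, hij using Nat.le_induction with
  | base => omega
  | succ j hj ih =>
    have := h j (by omega) (by omega)
    have := ih (by omega)
    omega

lemma strict_mono_of {f : ℕ → ℕ} (h : ∀ i, 1 ≤ i → i + 1 ≤ m → f i < f (i + 1)) :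
    ∀ i j, 1 ≤ i → i ≤ j → j ≤ m → f i ≤ f j ∧ (i < j → f i < f j) := by
  intro i j hi hij hjm
  induction j, hij using Nat.le_induction with
  | base => omega
  | succ j hj ih =>
    have := h j (by omega) (by omega)
    have := ih (by omega)
    omega

lemma card_idx' {k : ℕ} (hm : 2 ≤ m) (hk : 1 ≤ k) : (idx m k).card = (m - 1) * k + 1 := by
  have : idx m k = ({1} : Finset ℕ) ×ˢ Finset.Icc 1 m ∪ Finset.Icc 2 k ×ˢ Finset.Icc 2 m := by
    ext p
    simp only [mem_idx, Finset.mem_union, Finset.mem_product, Finset.mem_singleton,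
      Finset.mem_Icc]
    omega
  rw [this, Finset.card_union_of_disjoint, Finset.card_product, Finset.card_product]
  · obtain ⟨m', rfl⟩ := Nat.exists_eq_add_of_le hm
    obtain ⟨k', rfl⟩ := Nat.exists_eq_add_of_le hk
    simp [Nat.card_Icc]
    ring
  · rw [Finset.disjoint_left]
    intro p hp hq
    simp only [Finset.mem_product, Finset.mem_singleton, Finset.mem_Icc] at hp hq
    omega

lemma nondvd (hm : 2 ≤ m)
    (hmono : ∀ i, 1 ≤ i → i + 1 ≤ m → a (i + 1) < a i ∧ b i < b (i + 1))
    (ham : a m = 0) (hb1 : b 1 = 0) {k i j i' j' : ℕ}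
    (hv : (i, j) ∈ idx m k) (hv' : (i', j') ∈ idx m k)
    (hP : Pe a m k i' j' ≤ Pe a m k i j) (hQ : Pe b m k i' j' ≤ Pe b m k i j) :
    i = i' ∧ j = j' := by
  rw [mem_idx] at hv hv'
  obtain ⟨hi1, hik, hj1, hjm, hcon⟩ := hv
  obtain ⟨hi1', hik', hj1', hjm', hcon'⟩ := hv'
  have haj := strict_anti_of (m := m) (f := a) (fun i h1 h2 => (hmono i h1 h2).1)
  have hbj := strict_mono_of (m := m) (f := b) (fun i h1 h2 => (hmono i h1 h2).2)
  simp only [Pe, ham, hb1, mul_zero, add_zero, zero_add] at hP hQ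
  rcases lt_trichotomy i i' with h | h | h
  · -- i < i', so i' >= 2 and j' >= 2
    have hj2' : 2 ≤ j' := by omega
    have e1 : (i' - 1) * b m = (i - 1) * b m + (i' - i) * b m := by
      rw [← add_mul]; congr 1; omega
    have e2 : b m ≤ (i' - i) * b m := Nat.le_mul_of_pos_left _ (by omega)
    have f1 : b j ≤ b m := (hbj j m hj1 hjm (le_refl m)).1
    have f2 : b 1 < b 2 := (hmono 1 (le_refl 1) (by omega)).2
    have f3 : b 2 ≤ b j' := (hbj 2 j' (by omega) hj2' hjm').1
    omega
  · subst h
    rcases lt_trichotomy j j' with h2 | h2 | h2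
    · have := (hbj j j' hj1 (by omega) hjm').2 h2
      omega
    · exact ⟨rfl, h2⟩
    · have := (haj j' j hj1' (by omega) hjm).2 h2
      omega
  · -- i' < i, so i >= 2 and j >= 2
    have hj2 : 2 ≤ j := by omega
    have e1 : (k - i') * a 1 = (k - i) * a 1 + (i - i') * a 1 := by
      rw [← add_mul]; congr 1; omega
    have e2 : a 1 ≤ (i - i') * a 1 := Nat.le_mul_of_pos_left _ (by omega)
    have f1 : a j ≤ a 2 := (haj 2 j (by omega) hj2 hjm).1
    have f2 : a 2 < a 1 := (haj 1 2 (by omega) (by omega) hm).2 (by omega)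
    omega

variable (hm : 2 ≤ m)
    (hmono : ∀ i, 1 ≤ i → i + 1 ≤ m → a (i + 1) < a i ∧ b i < b (i + 1))
    (ham : a m = 0) (hb1 : b 1 = 0)

include hm hmono ham hb1

lemma SF_antichain {k : ℕ} {e e' : Fin 2 →₀ ℕ}
    (he : e ∈ SF a b m k) (he' : e' ∈ SF a b m k) (hle : e' ≤ e) : e' = e := by
  obtain ⟨⟨i, j⟩, hp, rfl⟩ := Finset.mem_image.1 he
  obtain ⟨⟨i', j'⟩, hp', rfl⟩ := Finset.mem_image.1 he'
  rw [Eexp, Eexp, E_le_iff] at hle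
  obtain ⟨h1, h2⟩ := nondvd hm hmono ham hb1 hp hp' hle.1 hle.2
  subst h1; subst h2; rfl

lemma Eexp_injOn {k : ℕ} : Set.InjOn (Eexp a b m k) ↑(idx m k) := by
  rintro ⟨i, j⟩ hp ⟨i', j'⟩ hp' he
  rw [Eexp, Eexp] at he
  obtain ⟨h1, h2⟩ := E_inj he
  obtain ⟨h3, h4⟩ := nondvd hm hmono ham hb1 hp' hp h1.le h2.le
  simp only [Prod.mk.injEq]
  exact ⟨h3.symm, h4.symm⟩

lemma card_SF {k : ℕ} (hk : 1 ≤ k) : (SF a b m k).card = (m - 1) * k + 1 := by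
  rw [SF, Finset.card_image_of_injOn (Eexp_injOn hm hmono ham hb1), card_idx' hm hk]

open Classical in
lemma card_genF {k : ℕ} (hk : 1 ≤ k) : (genF a b m k (K := K)).card = (m - 1) * k + 1 := by
  rw [genF, Finset.card_image_of_injective _ (monomial_left_injective (one_ne_zero)),
    card_SF hm hmono ham hb1 hk]

lemma ncard_genSet {k : ℕ} (hk : 1 ≤ k) :
    (genSet K a b m k).ncard = (m - 1) * k + 1 := by
  rw [genSet_eq_coe, Set.ncard_coe_finset, card_genF hm hmono ham hb1 hk]

lemma not_mem_span_diff {k : ℕ} :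
    ∀ v ∈ genSet K a b m k, v ∉ Ideal.span (genSet K a b m k \ {v}) := by
  have hinj : Function.Injective (fun e : Fin 2 →₀ ℕ => (monomial e (1 : K))) :=
    monomial_left_injective one_ne_zero
  rw [genSet_eq_coe, genF_coe_eq]
  rintro v hv
  obtain ⟨e, he, rfl⟩ := hv
  have himg : (fun e : Fin 2 →₀ ℕ => monomial e (1 : K)) '' ↑(SF a b m k) \ {monomial e (1 : K)}
      = (fun e : Fin 2 →₀ ℕ => monomial e (1 : K)) '' (↑(SF a b m k) \ {e}) := by
    rw [Set.image_diff hinj, Set.image_singleton]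
  rw [himg]
  intro hmem
  rw [mem_ideal_span_monomial_image] at hmem
  have hsup : e ∈ (monomial e (1 : K)).support := by
    classical
    rw [support_monomial]
    simp
  obtain ⟨e', he', hle⟩ := hmem e hsup
  obtain ⟨he'S, he'ne⟩ := he'
  exact he'ne (SF_antichain hm hmono ham hb1 he (by exact_mod_cast he'S) hle)

-- vanishing of coefficients strictly below an exponent of SF
lemma coeff_vanish {I : Ideal (MvPolynomial (Fin 2) K)}
    (hconc : ∀ i, 2 ≤ i → i + 1 ≤ m →
      a (i - 1) + a (i + 1) ≤ 2 * a i ∧ b (i - 1) + b (i + 1) ≤ 2 * b i)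
    (hI : I = Ideal.span ((fun i => X 0 ^ a i * X 1 ^ b i) '' Set.Icc 1 m))
    {k : ℕ} (hk : 1 ≤ k) {h : MvPolynomial (Fin 2) K} (hh : h ∈ I ^ k)
    {d e : Fin 2 →₀ ℕ} (he : e ∈ SF a b m k) (hde : d ≤ e) (hne : d ≠ e) :
    coeff d h = 0 := by
  by_contra hc
  rw [← span_genSet hm hmono hconc hI hk, genSet_eq_coe, genF_coe_eq,
    mem_ideal_span_monomial_image] at hh
  obtain ⟨e', he', hle⟩ := hh d (by rwa [mem_support_iff])
  have : e' = e := SF_antichain hm hmono ham hb1 he (by exact_mod_cast he') (hle.trans hde)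
  subst this
  exact hne (le_antisymm hde hle)

end Min
section Mu
variable {K : Type} [Field K] {m : ℕ} {a b : ℕ → ℕ}

def piMap (a b : ℕ → ℕ) (m k : ℕ) (K : Type) [Field K] :
    MvPolynomial (Fin 2) K →ₗ[K] (↥(SF a b m k) → K) where
  toFun f d := coeff d.1 f
  map_add' f g := by funext d; simp [coeff_add]
  map_smul' c f := by funext d; simp [coeff_smul]

variable (hm : 2 ≤ m)
    (hmono : ∀ i, 1 ≤ i → i + 1 ≤ m → a (i + 1) < a i ∧ b i < b (i + 1))
    (ham : a m = 0) (hb1 : b 1 = 0)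
    (hconc : ∀ i, 2 ≤ i → i + 1 ≤ m →
      a (i - 1) + a (i + 1) ≤ 2 * a i ∧ b (i - 1) + b (i + 1) ≤ 2 * b i)
    {I : Ideal (MvPolynomial (Fin 2) K)}
    (hI : I = Ideal.span ((fun i => X 0 ^ a i * X 1 ^ b i) '' Set.Icc 1 m))

include hm hmono ham hb1 hconc hI

lemma pi_mul {k : ℕ} (hk : 1 ≤ k) {t : MvPolynomial (Fin 2) K} (ht : t ∈ I ^ k)
    (f : MvPolynomial (Fin 2) K) :
    piMap a b m k K (f * t) = coeff 0 f • piMap a b m k K t := by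
  classical
  funext d
  show coeff d.1 (f * t) = coeff 0 f * coeff d.1 t
  rw [coeff_mul]
  have hmem0 : ((0 : Fin 2 →₀ ℕ), d.1) ∈ Finset.HasAntidiagonal.antidiagonal d.1 := by
    rw [Finset.HasAntidiagonal.mem_antidiagonal]; exact zero_add _
  rw [Finset.sum_eq_single_of_mem _ hmem0]
  rintro ⟨x1, x2⟩ hx hne
  rw [Finset.HasAntidiagonal.mem_antidiagonal] at hx
  rcases eq_or_ne x2 d.1 with h | h
  · subst h
    have hx1 : x1 = 0 := by
      have := hx
      rwa [add_eq_right] at this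
    exact absurd (by rw [hx1]) hne
  · have hx2 : x2 ≤ d.1 := hx ▸ le_add_self
    rw [coeff_vanish hm hmono ham hb1 hconc hI hk ht d.2 hx2 h, mul_zero]

lemma mu_lower {k : ℕ} (hk : 1 ≤ k)
    {T : Finset (MvPolynomial (Fin 2) K)}
    (hspan : Ideal.span (T : Set (MvPolynomial (Fin 2) K)) = I ^ k) :
    (m - 1) * k + 1 ≤ T.card := by
  classical
  set π := piMap a b m k K with hπ
  have hTJ : ∀ t ∈ (T : Set (MvPolynomial (Fin 2) K)), t ∈ I ^ k := fun t ht =>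
    hspan ▸ Ideal.subset_span ht
  have claim : ∀ h ∈ Ideal.span (T : Set (MvPolynomial (Fin 2) K)), ∀ f,
      π (f * h) ∈ Submodule.span K (π '' ↑T) := by
    intro h hh
    refine Submodule.span_induction
      (p := fun x _ => ∀ f, π (f * x) ∈ Submodule.span K (π '' ↑T)) ?_ ?_ ?_ ?_ hh
    · intro x hx f
      rw [hπ, pi_mul hm hmono ham hb1 hconc hI hk (hTJ x hx) f]
      exact Submodule.smul_mem _ _ (Submodule.subset_span ⟨x, hx, rfl⟩)
    · intro f; rw [mul_zero, map_zero]; exact Submodule.zero_mem _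
    · intro x y hx hy ihx ihy f
      rw [mul_add, map_add]; exact Submodule.add_mem _ (ihx f) (ihy f)
    · intro r x hx ih f
      rw [smul_eq_mul, show f * (r * x) = (f * r) * x by ring]
      exact ih (f * r)
  have htop : Submodule.span K (π '' ↑T) = ⊤ := by
    rw [eq_top_iff, ← Module.Basis.span_eq (Pi.basisFun K ↥(SF a b m k)), Submodule.span_le]
    rintro _ ⟨d, rfl⟩
    rw [Pi.basisFun_apply]
    have heq : (Pi.single d 1 : ↥(SF a b m k) → K) = π (monomial d.1 1) := by
      funext d'
      show _ = coeff d'.1 (monomial d.1 1)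
      rw [coeff_monomial, Pi.single_apply]
      by_cases h : d' = d
      · subst h; simp
      · rw [if_neg h, if_neg (fun hc => h (Subtype.ext hc.symm))]
    rw [heq]
    have hmem : (monomial d.1 1 : MvPolynomial (Fin 2) K)
        ∈ Ideal.span (T : Set (MvPolynomial (Fin 2) K)) := by
      rw [hspan, ← span_genSet hm hmono hconc hI hk]
      exact Ideal.subset_span (by
        rw [genSet_eq_coe, genF_coe_eq]
        exact ⟨d.1, d.2, rfl⟩)
    have := claim _ hmem 1
    rwa [one_mul] at this
  have h1 : Submodule.span K ((T.image ⇑π : Finset _) : Set (↥(SF a b m k) → K)) = ⊤ := by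
    rwa [Finset.coe_image]
  have h3 : Module.finrank K (↥(SF a b m k) → K) ≤ (T.image ⇑π).card := by
    have h2 := finrank_span_finset_le_card (R := K) (T.image ⇑π)
    rwa [Set.finrank, h1, finrank_top] at h2
  have h4 : Module.finrank K (↥(SF a b m k) → K) = (m - 1) * k + 1 := by
    rw [Module.finrank_pi, Fintype.card_coe, card_SF hm hmono ham hb1 hk]
  calc (m - 1) * k + 1 = Module.finrank K (↥(SF a b m k) → K) := h4.symm
    _ ≤ (T.image ⇑π).card := h3
    _ ≤ T.card := Finset.card_image_le

end Mu
end StmtAux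


open StmtAux in
/-- **Proposition 2.1(b).** -/
theorem stmt_4 (K : Type) [Field K] (m : ℕ) (hm : 2 ≤ m) (a b : ℕ → ℕ)
    (hmono : ∀ i, 1 ≤ i → i + 1 ≤ m → a (i + 1) < a i ∧ b i < b (i + 1))
    (ham : a m = 0) (hb1 : b 1 = 0)
    (hconc : ∀ i, 2 ≤ i → i + 1 ≤ m →
      a (i - 1) + a (i + 1) ≤ 2 * a i ∧ b (i - 1) + b (i + 1) ≤ 2 * b i)
    (I : Ideal (MvPolynomial (Fin 2) K))
    (hI : I = Ideal.span ((fun i => X 0 ^ a i * X 1 ^ b i) '' Set.Icc 1 m)) :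
    (∀ k, 1 ≤ k →
      Ideal.span (genSet K a b m k) = I ^ k ∧
      (∀ v ∈ genSet K a b m k, v ∉ Ideal.span (genSet K a b m k \ {v})) ∧
      (genSet K a b m k).ncard = (m - 1) * k + 1) ∧
    (∀ k, muGen (I ^ k) = (m - 1) * k + 1) := by
  constructor
  · intro k hk
    exact ⟨span_genSet hm hmono hconc hI hk,
      not_mem_span_diff hm hmono ham hb1,
      ncard_genSet hm hmono ham hb1 hk⟩
  · intro k
    rcases Nat.eq_zero_or_pos k with rfl | hk
    · rw [pow_zero, Ideal.one_eq_top]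
      show sInf {n : ℕ | ∃ T : Finset (MvPolynomial (Fin 2) K),
        T.card = n ∧ Ideal.span (T : Set (MvPolynomial (Fin 2) K)) = ⊤} = (m - 1) * 0 + 1
      have hone : (1 : ℕ) ∈ {n : ℕ | ∃ T : Finset (MvPolynomial (Fin 2) K),
          T.card = n ∧ Ideal.span (T : Set (MvPolynomial (Fin 2) K)) = ⊤} :=
        ⟨{1}, Finset.card_singleton _, by simp [Ideal.span_singleton_one]⟩
      apply le_antisymm
      · simpa using Nat.sInf_le hone
      · refine le_csInf ⟨1, hone⟩ ?_
        rintro n ⟨T, rfl, hspan⟩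
        by_contra hlt
        push_neg at hlt
        have hT : T = ∅ := Finset.card_eq_zero.1 (by omega)
        subst hT
        rw [Finset.coe_empty, Ideal.span_empty] at hspan
        have h1 : (1 : MvPolynomial (Fin 2) K) ∈ (⊥ : Ideal (MvPolynomial (Fin 2) K)) := by
          rw [hspan]; trivial
        exact one_ne_zero ((Ideal.mem_bot).1 h1)
    · apply le_antisymm
      · exact Nat.sInf_le ⟨genF a b m k, card_genF hm hmono ham hb1 hk, by
          rw [← genSet_eq_coe, span_genSet hm hmono hconc hI hk]⟩
      · refine le_csInf ⟨(m - 1) * k + 1, genF a b m k, card_genF hm hmono ham hb1 hk, by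
          rw [← genSet_eq_coe, span_genSet hm hmono hconc hI hk]⟩ ?_
        rintro n ⟨T, rfl, hspan⟩
        exact mu_lower hm hmono ham hb1 hconc hI hk hspan
end
end

section
/- Let I ⊂ K[x,y] be a concave or convex monomial ideal of height 2. Then I has no inner corner points if and only if I = (x^a, y^b)^k for some integers a, b, k ≥ 1. -/
open MvPolynomial

lemma aux_monom_eq (K : Type) [Field K] (A B : ℕ) :
    (X 0 ^ A * X 1 ^ B : MvPolynomial (Fin 2) K)
      = monomial (Finsupp.single 0 A + Finsupp.single 1 B) 1 := by
  rw [X_pow_eq_monomial, X_pow_eq_monomial, monomial_mul, one_mul]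

lemma aux_le_iff (A B A' B' : ℕ) :
    Finsupp.single (0 : Fin 2) A' + Finsupp.single 1 B' ≤
      Finsupp.single 0 A + Finsupp.single 1 B ↔ A' ≤ A ∧ B' ≤ B := by
  constructor
  · intro h
    have h0 := h 0
    have h1 := h 1
    simp [Finsupp.single_apply] at h0 h1
    exact ⟨h0, h1⟩
  · rintro ⟨h1, h2⟩ i
    fin_cases i <;> simp [Finsupp.single_apply, h1, h2]

lemma aux_spanPow (K : Type) [Field K] (p q : ℕ) : ∀ k,
    (Ideal.span {X 0 ^ p, X 1 ^ q} : Ideal (MvPolynomial (Fin 2) K)) ^ k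
      = Ideal.span ((fun j => X 0 ^ ((k - j) * p) * X 1 ^ (j * q)) '' Set.Icc 0 k) := by
  intro k
  induction k with
  | zero =>
    simp [Set.Icc_self, Ideal.one_eq_top, Ideal.span_singleton_one]
  | succ k ih =>
    rw [pow_succ, ih, Ideal.span_mul_span']
    apply le_antisymm
    · rw [Ideal.span_le]
      intro z hz
      rcases Set.mem_mul.mp hz with ⟨u, hu, v, hv, rfl⟩
      rcases hu with ⟨j, hj, rfl⟩
      simp only [Set.mem_Icc] at hj
      rcases hv with hv | hv
      · apply Ideal.subset_span
        refine ⟨j, by simp [Set.mem_Icc]; omega, ?_⟩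
        have h1 : (k + 1 - j) = (k - j) + 1 := by omega
        simp only [hv, h1, add_mul, one_mul, pow_add]
        ring
      · simp only [Set.mem_singleton_iff] at hv
        apply Ideal.subset_span
        refine ⟨j + 1, by simp [Set.mem_Icc]; omega, ?_⟩
        have h1 : (k + 1 - (j + 1)) = k - j := by omega
        simp only [hv, h1, add_mul, one_mul, pow_add]
        ring
    · rw [Ideal.span_le]
      rintro z ⟨j, hj, rfl⟩
      simp only [Set.mem_Icc] at hj
      apply Ideal.subset_span
      rcases Nat.lt_or_ge j (k + 1) with h | h
      · refine Set.mem_mul.mpr ⟨X 0 ^ ((k - j) * p) * X 1 ^ (j * q),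
          ⟨j, by simp [Set.mem_Icc]; omega, rfl⟩, X 0 ^ p, Or.inl rfl, ?_⟩
        have h1 : (k + 1 - j) = (k - j) + 1 := by omega
        simp only [h1, add_mul, one_mul, pow_add]
        ring
      · have hj' : j = k + 1 := by omega
        refine Set.mem_mul.mpr ⟨X 0 ^ ((k - k) * p) * X 1 ^ (k * q),
          ⟨k, by simp [Set.mem_Icc], rfl⟩, X 1 ^ q, Or.inr rfl, ?_⟩
        subst hj'
        have h1 : (k + 1 - (k + 1)) = k - k := by omega
        simp only [h1, add_mul, one_mul, pow_add]
        ring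

/-- **Proposition 2.3.** Let `I ⊆ K[x,y]` be a concave or convex monomial ideal of
height 2 with minimal monomial generators `u i = x^(a i) * y^(b i)`, `i = 1, …, m`.
Then `I` has no inner corner points (i.e. for every inner index `i` the
concavity/convexity inequality `2 c i ≥ c (i-1) + c (i+1)`, resp. `≤`, is an equality,
equivalently it is never strict) if and only if `I = (x^p, y^q)^k` for some integers
`p, q, k ≥ 1`. -/
theorem stmt_5 (K : Type) [Field K] (m : ℕ) (hm : 2 ≤ m) (a b : ℕ → ℕ)
    (hmono : ∀ i, 1 ≤ i → i + 1 ≤ m → a (i + 1) < a i ∧ b i < b (i + 1))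
    (ham : a m = 0) (hb1 : b 1 = 0)
    (hcc : (∀ i, 2 ≤ i → i + 1 ≤ m →
              a (i - 1) + a (i + 1) ≤ 2 * a i ∧ b (i - 1) + b (i + 1) ≤ 2 * b i) ∨
           (∀ i, 2 ≤ i → i + 1 ≤ m →
              2 * a i ≤ a (i - 1) + a (i + 1) ∧ 2 * b i ≤ b (i - 1) + b (i + 1)))
    (I : Ideal (MvPolynomial (Fin 2) K))
    (hI : I = Ideal.span ((fun i => X 0 ^ a i * X 1 ^ b i) '' Set.Icc 1 m)) :
    (∀ i, 2 ≤ i → i + 1 ≤ m →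
        a (i - 1) + a (i + 1) = 2 * a i ∧ b (i - 1) + b (i + 1) = 2 * b i) ↔
    (∃ p q k : ℕ, 1 ≤ p ∧ 1 ≤ q ∧ 1 ≤ k ∧
        I = (Ideal.span {X 0 ^ p, X 1 ^ q} : Ideal (MvPolynomial (Fin 2) K)) ^ k) := by
  classical
  -- strict monotonicity on the whole interval
  have hmono' : ∀ i' i, 1 ≤ i → i < i' → i' ≤ m → a i' < a i ∧ b i < b i' := by
    intro i'
    induction i' with
    | zero => omega
    | succ n ih =>
      intro i h1 h2 h3
      rcases Nat.lt_or_ge i n with h | h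
      · have H1 := ih i h1 h (by omega)
        have H2 := hmono n (by omega) (by omega)
        exact ⟨lt_trans H2.1 H1.1, lt_trans H1.2 H2.2⟩
      · have hi : i = n := by omega
        subst hi
        exact hmono i h1 h3
  constructor
  · -- forward direction
    intro heq
    have hp : 1 ≤ a (m - 1) := by
      have h := (hmono (m - 1) (by omega) (by omega)).1
      have e : m - 1 + 1 = m := by omega
      rw [e, ham] at h
      omega
    have hq : 1 ≤ b 2 := by
      have h := (hmono 1 le_rfl hm).2
      have e : b 2 = b (1 + 1) := rfl
      rw [hb1] at h
      omega
    have key_a : ∀ t, ∀ i, 1 ≤ i → i + 1 + t = m → a i = a (i + 1) + a (m - 1) := by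
      intro t
      induction t with
      | zero =>
        intro i h1 h2
        have hm1 : m - 1 = i := by omega
        have hm2 : a (i + 1) = 0 := by
          rw [show i + 1 = m by omega, ham]
        rw [hm1, hm2]
        omega
      | succ t ih =>
        intro i h1 h2
        have e2 := (heq (i + 1) (by omega) (by omega)).1
        have e3 : i + 1 - 1 = i := by omega
        rw [e3] at e2
        have e4 := ih (i + 1) (by omega) (by omega)
        omega
    have val_a : ∀ t, ∀ i, 1 ≤ i → i + t = m → a i = t * a (m - 1) := by
      intro t
      induction t with
      | zero =>
        intro i h1 h2
        rw [show i = m by omega, ham]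
        omega
      | succ t ih =>
        intro i h1 h2
        have e1 := key_a t i h1 (by omega)
        have e2 := ih (i + 1) (by omega) (by omega)
        rw [e1, e2, add_mul, one_mul]
    have key_b : ∀ i, 1 ≤ i → i + 1 ≤ m → b (i + 1) = b i + b 2 := by
      intro i
      induction i with
      | zero => omega
      | succ n ih =>
        intro _ h2
        rcases Nat.eq_zero_or_pos n with hn | hn
        · subst hn
          have e1 : (0 : ℕ) + 1 + 1 = 2 := rfl
          have e2 : (0 : ℕ) + 1 = 1 := rfl
          rw [e1, e2, hb1]
          omega
        · have e2 := (heq (n + 1) (by omega) (by omega)).2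
          have e3 : n + 1 - 1 = n := by omega
          rw [e3] at e2
          have e4 := ih (by omega) (by omega)
          omega
    have val_b : ∀ t, ∀ i, i = t + 1 → i ≤ m → b i = t * b 2 := by
      intro t
      induction t with
      | zero =>
        intro i h1 h2
        rw [h1]
        have e2 : (0 : ℕ) + 1 = 1 := rfl
        rw [e2, hb1, zero_mul]
      | succ t ih =>
        intro i h1 h2
        have e1 := key_b (t + 1) (by omega) (by omega)
        have e2 := ih (t + 1) rfl (by omega)
        rw [h1, e1, e2, add_mul, one_mul]
    refine ⟨a (m - 1), b 2, m - 1, hp, hq, by omega, ?_⟩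
    rw [hI, aux_spanPow]
    congr 1
    ext z
    simp only [Set.mem_image, Set.mem_Icc]
    constructor
    · rintro ⟨i, ⟨hi1, hi2⟩, rfl⟩
      refine ⟨i - 1, ⟨by omega, by omega⟩, ?_⟩
      have h1 : a i = (m - i) * a (m - 1) := val_a (m - i) i hi1 (by omega)
      have h2 : b i = (i - 1) * b 2 := val_b (i - 1) i (by omega) hi2
      have h3 : m - 1 - (i - 1) = m - i := by omega
      rw [h3, ← h1, ← h2]
    · rintro ⟨j, ⟨_, hj2⟩, rfl⟩
      refine ⟨j + 1, ⟨by omega, by omega⟩, ?_⟩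
      have h1 : a (j + 1) = (m - (j + 1)) * a (m - 1) :=
        val_a (m - (j + 1)) (j + 1) (by omega) (by omega)
      have h2 : b (j + 1) = j * b 2 := val_b j (j + 1) rfl (by omega)
      have h3 : m - 1 - j = m - (j + 1) := by omega
      rw [h3, ← h1, ← h2]
  · -- backward direction
    rintro ⟨p, q, k, hp, hq, hk, hIk⟩
    rw [aux_spanPow] at hIk
    have himg1 : ((fun i => X 0 ^ a i * X 1 ^ b i) '' Set.Icc 1 m : Set (MvPolynomial (Fin 2) K))
        = (fun s => monomial s (1 : K)) ''
            ((fun i => Finsupp.single (0 : Fin 2) (a i) + Finsupp.single 1 (b i)) '' Set.Icc 1 m) := by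
      rw [Set.image_image]
      exact Set.image_congr' (fun i => aux_monom_eq K (a i) (b i))
    have himg2 : ((fun j => X 0 ^ ((k - j) * p) * X 1 ^ (j * q)) '' Set.Icc 0 k
            : Set (MvPolynomial (Fin 2) K))
        = (fun s => monomial s (1 : K)) ''
            ((fun j => Finsupp.single (0 : Fin 2) ((k - j) * p) + Finsupp.single 1 (j * q))
              '' Set.Icc 0 k) := by
      rw [Set.image_image]
      exact Set.image_congr' (fun j => aux_monom_eq K ((k - j) * p) (j * q))
    have hspan : Ideal.span ((fun s => monomial s (1 : K)) ''
          ((fun i => Finsupp.single (0 : Fin 2) (a i) + Finsupp.single 1 (b i)) '' Set.Icc 1 m))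
        = Ideal.span ((fun s => monomial s (1 : K)) ''
          ((fun j => Finsupp.single (0 : Fin 2) ((k - j) * p) + Finsupp.single 1 (j * q))
            '' Set.Icc 0 k)) := by
      rw [← himg1, ← himg2, ← hI, hIk]
    have claim1 : ∀ i, 1 ≤ i → i ≤ m → ∃ j, j ≤ k ∧ (k - j) * p ≤ a i ∧ j * q ≤ b i := by
      intro i h1 h2
      have hmem : (monomial (Finsupp.single (0 : Fin 2) (a i) + Finsupp.single 1 (b i)) (1 : K)) ∈
          Ideal.span ((fun s => monomial s (1 : K)) ''
            ((fun j => Finsupp.single (0 : Fin 2) ((k - j) * p) + Finsupp.single 1 (j * q))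
              '' Set.Icc 0 k)) := by
        rw [← hspan]
        exact Ideal.subset_span ⟨_, ⟨i, Set.mem_Icc.mpr ⟨h1, h2⟩, rfl⟩, rfl⟩
      have hsupp : (Finsupp.single (0 : Fin 2) (a i) + Finsupp.single 1 (b i)) ∈
          (monomial (Finsupp.single (0 : Fin 2) (a i) + Finsupp.single 1 (b i)) (1 : K)).support := by
        rw [support_monomial]
        simp
      obtain ⟨si, ⟨j, hj, rfl⟩, hle⟩ := mem_ideal_span_monomial_image.mp hmem _ hsupp
      simp only [Set.mem_Icc] at hj
      obtain ⟨hA, hB⟩ := (aux_le_iff _ _ _ _).mp hle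
      exact ⟨j, hj.2, hA, hB⟩
    have claim2 : ∀ j, j ≤ k → ∃ i, 1 ≤ i ∧ i ≤ m ∧ a i ≤ (k - j) * p ∧ b i ≤ j * q := by
      intro j hj
      have hmem : (monomial (Finsupp.single (0 : Fin 2) ((k - j) * p) + Finsupp.single 1 (j * q))
            (1 : K)) ∈
          Ideal.span ((fun s => monomial s (1 : K)) ''
            ((fun i => Finsupp.single (0 : Fin 2) (a i) + Finsupp.single 1 (b i))
              '' Set.Icc 1 m)) := by
        rw [hspan]
        exact Ideal.subset_span ⟨_, ⟨j, Set.mem_Icc.mpr ⟨Nat.zero_le _, hj⟩, rfl⟩, rfl⟩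
      have hsupp : (Finsupp.single (0 : Fin 2) ((k - j) * p) + Finsupp.single 1 (j * q)) ∈
          (monomial (Finsupp.single (0 : Fin 2) ((k - j) * p) + Finsupp.single 1 (j * q))
            (1 : K)).support := by
        rw [support_monomial]
        simp
      obtain ⟨si, ⟨i, hi, rfl⟩, hle⟩ := mem_ideal_span_monomial_image.mp hmem _ hsupp
      simp only [Set.mem_Icc] at hi
      obtain ⟨hA, hB⟩ := (aux_le_iff _ _ _ _).mp hle
      exact ⟨i, hi.1, hi.2, hA, hB⟩
    -- each generator is exactly of the form ((k-j)p, jq)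
    have hfun : ∀ i, ∃ j, 1 ≤ i → i ≤ m → j ≤ k ∧ a i = (k - j) * p ∧ b i = j * q := by
      intro i
      by_cases hi : 1 ≤ i ∧ i ≤ m
      · obtain ⟨j, hjk, hA, hB⟩ := claim1 i hi.1 hi.2
        obtain ⟨i', h1', h2', hA', hB'⟩ := claim2 j hjk
        have hii : i' = i := by
          rcases Nat.lt_trichotomy i' i with h | h | h
          · have := (hmono' i i' h1' h hi.2).1
            omega
          · exact h
          · have := (hmono' i' i hi.1 h h2').2
            omega
        subst hii
        exact ⟨j, fun _ _ => ⟨hjk, by omega, by omega⟩⟩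
      · exact ⟨0, fun h1 h2 => absurd ⟨h1, h2⟩ hi⟩
    choose f hf using hfun
    -- every j ≤ k is attained
    have hsurj : ∀ j, j ≤ k → ∃ i, 1 ≤ i ∧ i ≤ m ∧ f i = j := by
      intro j hj
      obtain ⟨i, h1, h2, hA, hB⟩ := claim2 j hj
      obtain ⟨hfk, hfa, hfb⟩ := hf i h1 h2
      obtain ⟨j', hjk', hA', hB'⟩ := claim1 i h1 h2
      refine ⟨i, h1, h2, ?_⟩
      have e1 : f i * q ≤ j * q := by rw [← hfb]; exact hB
      have e2 : (k - f i) * p ≤ (k - j) * p := by rw [← hfa]; exact hA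
      have e3 : f i ≤ j := Nat.le_of_mul_le_mul_right e1 (by omega)
      have e4 : k - f i ≤ k - j := Nat.le_of_mul_le_mul_right e2 (by omega)
      omega
    -- f is strictly monotone
    have hfmono : ∀ i i', 1 ≤ i → i < i' → i' ≤ m → f i < f i' := by
      intro i i' h1 h2 h3
      have hb := (hmono' i' i h1 h2 h3).2
      obtain ⟨_, _, hfb⟩ := hf i h1 (by omega)
      obtain ⟨_, _, hfb'⟩ := hf i' (by omega) h3
      rw [hfb, hfb'] at hb
      exact lt_of_mul_lt_mul_right hb (Nat.zero_le q)
    -- consecutive values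
    have hstep : ∀ i, 1 ≤ i → i + 1 ≤ m → f (i + 1) = f i + 1 := by
      intro i h1 h2
      have hlt : f i < f (i + 1) := hfmono i (i + 1) h1 (by omega) h2
      by_contra hne
      have hgt : f i + 1 < f (i + 1) := by omega
      obtain ⟨hk1, _, _⟩ := hf (i + 1) (by omega) h2
      obtain ⟨i0, hi01, hi02, hi0⟩ := hsurj (f i + 1) (by omega)
      have c1 : i < i0 := by
        by_contra hc
        rcases Nat.lt_or_ge i0 i with h | h
        · have := hfmono i0 i hi01 h (by omega)
          omega
        · have hEq : i0 = i := by omega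
          rw [hEq] at hi0
          omega
      have c2 : i0 < i + 1 := by
        by_contra hc
        rcases Nat.lt_or_ge (i + 1) i0 with h | h
        · have := hfmono (i + 1) i0 (by omega) h hi02
          omega
        · have hEq : i0 = i + 1 := by omega
          rw [hEq] at hi0
          omega
      omega
    intro i h2 h3
    have e0 : i - 1 + 1 = i := by omega
    have hs1 : f i = f (i - 1) + 1 := by
      have h := hstep (i - 1) (by omega) (by omega)
      rw [e0] at h
      exact h.symm ▸ rfl
    have hs2 : f (i + 1) = f i + 1 := hstep i (by omega) h3
    obtain ⟨hk0, ha0, hb0⟩ := hf (i - 1) (by omega) (by omega)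
    obtain ⟨hk1, ha1, hb1'⟩ := hf i (by omega) (by omega)
    obtain ⟨hk2, ha2, hb2⟩ := hf (i + 1) (by omega) h3
    constructor
    · rw [ha0, ha1, ha2]
      have h : (k - f (i - 1)) + (k - f (i + 1)) = 2 * (k - f i) := by omega
      rw [← add_mul, h, mul_assoc]
    · rw [hb0, hb1', hb2]
      have h : f (i - 1) + f (i + 1) = 2 * f i := by omega
      rw [← add_mul, h, mul_assoc]
end

section
/- Let I ⊂ K[x,y] be a convex monomial ideal of height 2, with minimal monomial generators u_1 > … > u_m, which has an inner corner point, and let J = (u_1, u_m). Then I^{k+1} ≠ JI^k for all k ≥ 1. In particular, if c_{i+1} is an inner corner point of I, then u_{i+1}^{k+1} ∈ I^{k+1} \ JI^k for all k ≥ 1, so J is not a reduction ideal of I. -/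
open MvPolynomial

open Pointwise


private lemma weight_min (m r : ℕ) (a b : ℕ → ℕ)
    (hmono : ∀ i, 1 ≤ i → i + 1 ≤ m → a (i + 1) < a i ∧ b i < b (i + 1))
    (hconv : ∀ i, 2 ≤ i → i + 1 ≤ m →
      2 * a i ≤ a (i - 1) + a (i + 1) ∧ 2 * b i ≤ b (i - 1) + b (i + 1))
    (hr2 : 2 ≤ r) (hrm : r + 1 ≤ m)
    (hc : ((2 * a r, 2 * b r) : ℕ × ℕ) < (a (r - 1) + a (r + 1), b (r - 1) + b (r + 1))) :
    ∃ α β : ℕ, 0 < α ∧ 0 < β ∧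
      (∀ i, 1 ≤ i → i ≤ m → α * a r + β * b r ≤ α * a i + β * b i) ∧
      α * a r + β * b r < α * a 1 + β * b 1 ∧
      α * a r + β * b r < α * a m + β * b m := by
  have h1 := hmono (r-1) (by omega) (by omega)
  have hr1 : r - 1 + 1 = r := by omega
  rw [hr1] at h1
  have h2 := hmono r (by omega) (by omega)
  set α := b (r+1) - b (r-1) with hαdef
  set β := a (r-1) - a (r+1) with hβdef
  have hα : 0 < α := by omega
  have hβ : 0 < β := by omega
  set D : ℕ → ℤ := fun i => (α:ℤ) * a i + (β:ℤ) * b i with hD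
  have Dconv : ∀ i, 2 ≤ i → i + 1 ≤ m → 2 * D i ≤ D (i-1) + D (i+1) := by
    intro i h2i him
    obtain ⟨ca, cb⟩ := hconv i h2i him
    have ca' : (2 * a i : ℤ) ≤ (a (i-1) : ℤ) + a (i+1) := by exact_mod_cast ca
    have cb' : (2 * b i : ℤ) ≤ (b (i-1) : ℤ) + b (i+1) := by exact_mod_cast cb
    have t1 := mul_le_mul_of_nonneg_left ca' (by positivity : (0:ℤ) ≤ (α:ℤ))
    have t2 := mul_le_mul_of_nonneg_left cb' (by positivity : (0:ℤ) ≤ (β:ℤ))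
    simp only [hD]
    linarith
  have Deq : D (r-1) = D (r+1) := by
    have ha : (a (r-1) : ℤ) = (a (r+1) : ℤ) + (β:ℤ) := by omega
    have hb : (b (r+1) : ℤ) = (b (r-1) : ℤ) + (α:ℤ) := by omega
    simp only [hD]
    rw [ha, hb]; ring
  have Dlt : D r < D (r-1) := by
    rw [Prod.lt_iff] at hc
    have hA : 2 * D r < D (r-1) + D (r+1) := by
      simp only [hD]
      have hαz : (0:ℤ) < (α:ℤ) := by exact_mod_cast hα
      have hβz : (0:ℤ) < (β:ℤ) := by exact_mod_cast hβ
      rcases hc with ⟨hs, hw⟩ | ⟨hw, hs⟩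
      · have hs' : (2 * a r : ℤ) < (a (r-1) : ℤ) + a (r+1) := by exact_mod_cast hs
        have hw' : (2 * b r : ℤ) ≤ (b (r-1) : ℤ) + b (r+1) := by exact_mod_cast hw
        nlinarith
      · have hw' : (2 * a r : ℤ) ≤ (a (r-1) : ℤ) + a (r+1) := by exact_mod_cast hw
        have hs' : (2 * b r : ℤ) < (b (r-1) : ℤ) + b (r+1) := by exact_mod_cast hs
        nlinarith
    linarith [Deq]
  have left : ∀ t : ℕ, ∀ i, i + t = r - 1 → 1 ≤ i →
      D (r-1) ≤ D i ∧ D (r-1) - D r ≤ D i - D (i+1) := by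
    intro t
    induction t with
    | zero =>
      intro i hi h1i
      have e1 : i = r - 1 := by omega
      have e2 : i + 1 = r := by omega
      rw [e2, e1]
      exact ⟨le_refl _, le_refl _⟩
    | succ t ih =>
      intro i hi h1i
      obtain ⟨ihA, ihB⟩ := ih (i+1) (by omega) (by omega)
      have hcv := Dconv (i+1) (by omega) (by omega)
      have e1 : i + 1 - 1 = i := by omega
      rw [e1] at hcv
      constructor
      · linarith
      · linarith
  have right : ∀ t : ℕ, r + 1 + t ≤ m →
      D (r+1) ≤ D (r+1+t) ∧ D (r+1) - D r ≤ D (r+1+t) - D (r+t) := by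
    intro t
    induction t with
    | zero =>
      intro _
      constructor
      · exact le_refl _
      · exact le_refl _
    | succ t ih =>
      intro hle
      obtain ⟨ihA, ihB⟩ := ih (by omega)
      have hcv := Dconv (r+1+t) (by omega) (by omega)
      have e1 : r + 1 + t - 1 = r + t := by omega
      have e2 : r + 1 + t + 1 = r + 1 + (t+1) := by omega
      have e3 : r + (t + 1) = r + 1 + t := by omega
      rw [e2, e1] at hcv
      rw [e3]
      constructor
      · linarith
      · linarith
  have hmin : ∀ i, 1 ≤ i → i ≤ m → D r ≤ D i := by
    intro i h1i him
    rcases lt_trichotomy i r with h | h | h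
    · obtain ⟨hA, _⟩ := left (r - 1 - i) i (by omega) h1i
      linarith
    · rw [h]
    · obtain ⟨hA, _⟩ := right (i - (r+1)) (by omega)
      have e1 : r + 1 + (i - (r+1)) = i := by omega
      rw [e1] at hA
      linarith [Deq]
  have h1lt : D r < D 1 := by
    obtain ⟨hA, _⟩ := left (r - 1 - 1) 1 (by omega) (le_refl _)
    linarith
  have hmlt : D r < D m := by
    obtain ⟨hA, _⟩ := right (m - (r+1)) (by omega)
    have e1 : r + 1 + (m - (r+1)) = m := by omega
    rw [e1] at hA
    linarith [Deq]
  refine ⟨α, β, hα, hβ, ?_, ?_, ?_⟩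
  · intro i hi1 him
    have := hmin i hi1 him
    simp only [hD] at this
    exact_mod_cast this
  · have := h1lt; simp only [hD] at this; exact_mod_cast this
  · have := hmlt; simp only [hD] at this; exact_mod_cast this

private lemma span_mon_mul (K : Type) [Field K] (A B : Set (Fin 2 →₀ ℕ)) :
    Ideal.span ((fun s => monomial s (1:K)) '' A) * Ideal.span ((fun s => monomial s (1:K)) '' B)
    = Ideal.span ((fun s => monomial s (1:K)) '' (A + B)) := by
  rw [Ideal.span_mul_span']
  congr 1
  ext p
  constructor
  · intro hp
    rw [Set.mem_mul] at hp
    obtain ⟨x, ⟨s, hs, rfl⟩, y, ⟨t, ht, rfl⟩, rfl⟩ := hp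
    exact ⟨s + t, Set.add_mem_add hs ht, by rw [monomial_mul, one_mul]⟩
  · rintro ⟨u, hu, rfl⟩
    obtain ⟨s, hs, t, ht, rfl⟩ := hu
    have := Set.mul_mem_mul (Set.mem_image_of_mem (fun s => monomial s (1:K)) hs) (Set.mem_image_of_mem (fun s => monomial s (1:K)) ht)
    rwa [monomial_mul, one_mul] at this

/-- **Proposition 2.9.** Let `I ⊆ K[x,y]` be a convex monomial ideal of height 2 with
minimal monomial generators `u 1 > … > u m`, `u i = x^(a i) * y^(b i)`, which has an
inner corner point (an inner index `r` where the convexity inequality is strict, i.e.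
`2 • c r < c (r-1) + c (r+1)` in the componentwise strict order), and let
`J = (u 1, u m)`.  Then `I^(k+1) ≠ J * I^k` for all `k ≥ 1`.  In particular, if `c r`
is an inner corner point of `I` then `u r ^ (k+1) ∈ I^(k+1) \ J * I^k` for all `k ≥ 1`,
and `J` is not a reduction ideal of `I`. -/

theorem stmt_9 (K : Type) [Field K] (m : ℕ) (hm : 2 ≤ m) (a b : ℕ → ℕ)
    (hmono : ∀ i, 1 ≤ i → i + 1 ≤ m → a (i + 1) < a i ∧ b i < b (i + 1))
    (ham : a m = 0) (hb1 : b 1 = 0)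
    (hconv : ∀ i, 2 ≤ i → i + 1 ≤ m →
      2 * a i ≤ a (i - 1) + a (i + 1) ∧ 2 * b i ≤ b (i - 1) + b (i + 1))
    (hcorner : ∃ r, 2 ≤ r ∧ r + 1 ≤ m ∧
      ((2 * a r, 2 * b r) : ℕ × ℕ) < (a (r - 1) + a (r + 1), b (r - 1) + b (r + 1)))
    (I J : Ideal (MvPolynomial (Fin 2) K))
    (hI : I = Ideal.span ((fun i => X 0 ^ a i * X 1 ^ b i) '' Set.Icc 1 m))
    (hJ : J = Ideal.span {X 0 ^ a 1 * X 1 ^ b 1, X 0 ^ a m * X 1 ^ b m}) :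
    (∀ k, 1 ≤ k → I ^ (k + 1) ≠ J * I ^ k) ∧
    (∀ r, 2 ≤ r → r + 1 ≤ m →
      ((2 * a r, 2 * b r) : ℕ × ℕ) < (a (r - 1) + a (r + 1), b (r - 1) + b (r + 1)) →
      ∀ k, 1 ≤ k →
        (X 0 ^ a r * X 1 ^ b r) ^ (k + 1) ∈ I ^ (k + 1) ∧
        (X 0 ^ a r * X 1 ^ b r) ^ (k + 1) ∉ J * I ^ k) ∧
    ¬ (∃ k : ℕ, I ^ (k + 1) = J * I ^ k) := by
  -- the exponent vectors as finitely supported functions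
  set e : ℕ → (Fin 2 →₀ ℕ) := fun i => Finsupp.single 0 (a i) + Finsupp.single 1 (b i) with he
  have hgen : ∀ i, (X 0 ^ a i * X 1 ^ b i : MvPolynomial (Fin 2) K) = monomial (e i) 1 := by
    intro i
    rw [X_pow_eq_monomial, X_pow_eq_monomial, monomial_mul, one_mul]
  have hgenfun : (fun i => (X 0 ^ a i * X 1 ^ b i : MvPolynomial (Fin 2) K))
      = fun i => monomial (e i) 1 := funext hgen
  have hIeq : I = Ideal.span ((fun s => monomial s (1:K)) '' (e '' Set.Icc 1 m)) := by
    rw [hI, hgenfun, ← Set.image_comp]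
    rfl
  have hJeq : J = Ideal.span ((fun s => monomial s (1:K)) '' {e 1, e m}) := by
    rw [hJ, hgen 1, hgen m, Set.image_pair]
  have her : ∀ i, (e i) 0 = a i ∧ (e i) 1 = b i := by
    intro i
    constructor <;> simp [he, Finsupp.single_apply]
  -- membership of generators in I
  have memI : ∀ i, 1 ≤ i → i ≤ m → (X 0 ^ a i * X 1 ^ b i : MvPolynomial (Fin 2) K) ∈ I := by
    intro i h1 h2
    rw [hI]
    exact Ideal.subset_span ⟨i, Set.mem_Icc.mpr ⟨h1, h2⟩, rfl⟩
  -- the key non-membership lemma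
  have main : ∀ r, 2 ≤ r → r + 1 ≤ m →
      ((2 * a r, 2 * b r) : ℕ × ℕ) < (a (r - 1) + a (r + 1), b (r - 1) + b (r + 1)) →
      ∀ k : ℕ, (X 0 ^ a r * X 1 ^ b r) ^ (k + 1) ∉ J * I ^ k := by
    intro r hr2 hrm hc k hmem
    obtain ⟨α, β, hα, hβ, hmin, h1lt, hmlt⟩ := weight_min m r a b hmono hconv hr2 hrm hc
    set dw : (Fin 2 →₀ ℕ) → ℕ := fun s => α * s 0 + β * s 1 with hdw
    have dwe : ∀ i, dw (e i) = α * a i + β * b i := by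
      intro i
      simp [hdw, (her i).1, (her i).2]
    have prod_rep : ∀ k : ℕ, ∃ T : Set (Fin 2 →₀ ℕ),
        J * I ^ k = Ideal.span ((fun s => monomial s (1:K)) '' T) ∧
        ∀ s ∈ T, (k+1) * (α * a r + β * b r) < dw s := by
      intro k
      induction k with
      | zero =>
        refine ⟨{e 1, e m}, by rw [pow_zero, mul_one, hJeq], ?_⟩
        rintro s (rfl | rfl)
        · rw [dwe]; simpa using h1lt
        · rw [dwe]; simpa using hmlt
      | succ k ih =>
        obtain ⟨T, hT, hTb⟩ := ih
        refine ⟨T + (e '' Set.Icc 1 m), ?_, ?_⟩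
        · rw [pow_succ, ← mul_assoc, hT, hIeq, span_mon_mul]
        · intro s hs
          obtain ⟨u, hu, v, hv, rfl⟩ := hs
          obtain ⟨i, hi, rfl⟩ := hv
          rw [Set.mem_Icc] at hi
          have h1 := hTb u hu
          have h2 : α * a r + β * b r ≤ dw (e i) := by
            rw [dwe]; exact hmin i hi.1 hi.2
          have hadd : dw (u + e i) = dw u + dw (e i) := by
            simp [hdw]; ring
          have expand : (k+1+1) * (α * a r + β * b r)
              = (k+1) * (α * a r + β * b r) + (α * a r + β * b r) := by ring
          rw [hadd, expand]
          exact add_lt_add_of_lt_of_le h1 h2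
    obtain ⟨T, hT, hTb⟩ := prod_rep k
    rw [hT, hgen r, monomial_pow, one_pow, mem_ideal_span_monomial_image] at hmem
    obtain ⟨s, hsT, hle⟩ := hmem ((k+1) • e r) (by simp [support_monomial])
    have hb := hTb s hsT
    have hle0 : s 0 ≤ (k+1) * a r := by
      have := hle 0
      simpa [Finsupp.smul_apply, (her r).1] using this
    have hle1 : s 1 ≤ (k+1) * b r := by
      have := hle 1
      simpa [Finsupp.smul_apply, (her r).2] using this
    have c1 : α * s 0 ≤ α * ((k+1) * a r) := Nat.mul_le_mul_left _ hle0
    have c2 : β * s 1 ≤ β * ((k+1) * b r) := Nat.mul_le_mul_left _ hle1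
    have hexp : (k+1) * (α * a r + β * b r) = α * ((k+1) * a r) + β * ((k+1) * b r) := by ring
    simp only [hdw] at hb
    omega
  obtain ⟨r0, hr02, hr0m, hc0⟩ := hcorner
  have mempow : ∀ r, 1 ≤ r → r ≤ m → ∀ k : ℕ,
      (X 0 ^ a r * X 1 ^ b r) ^ (k + 1) ∈ I ^ (k + 1) :=
    fun r h1 h2 k => Ideal.pow_mem_pow (memI r h1 h2) (k+1)
  refine ⟨?_, ?_, ?_⟩
  · intro k _ heq
    exact main r0 hr02 hr0m hc0 k (heq ▸ mempow r0 (by omega) (by omega) k)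
  · intro r hr2 hrm hc k _
    exact ⟨mempow r (by omega) (by omega) k, main r hr2 hrm hc k⟩
  · rintro ⟨k, heq⟩
    exact main r0 hr02 hr0m hc0 k (heq ▸ mempow r0 (by omega) (by omega) k)
end

section
/- Let 0 < a < b be coprime integers and let S_1 = ⟨a, b⟩ ⊆ ℕ be the numerical semigroup generated by a and b. Then the Apéry set of S_1 with respect to a + b is Ap(a+b, S_1) = {0} ∪ {ia : 1 ≤ i ≤ b−1} ∪ {jb : 1 ≤ j ≤ a}, and these a + b listed elements are pairwise distinct. -/
/-- The Apéry set `Ap(n, S₁)` of a numerical semigroup `S₁ ⊆ ℕ` with respect to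
`n ∈ S₁`: the set of `s ∈ S₁` such that `s - n ∉ S₁` (that is, `s` is not of the
form `t + n` with `t ∈ S₁`). -/
def aperySet (S₁ : AddSubmonoid ℕ) (n : ℕ) : Set ℕ :=
  {s | s ∈ S₁ ∧ ¬ ∃ t ∈ S₁, t + n = s}

/-- Let `0 < a < b` be coprime integers and `S₁ = ⟨a, b⟩` the numerical semigroup
generated by `a` and `b`.  Then the Apéry set of `S₁` with respect to `a + b` is
`Ap(a+b, S₁) = {0} ∪ {i·a : 1 ≤ i ≤ b-1} ∪ {j·b : 1 ≤ j ≤ a}`, and these `a + b`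
listed elements are pairwise distinct (so the set has exactly `a + b` elements). -/
theorem stmt_15 (a b : ℕ) (ha : 0 < a) (hab : a < b) (hgcd : Nat.Coprime a b) :
    aperySet (AddSubmonoid.closure {a, b}) (a + b) =
      {0} ∪ ((fun i => i * a) '' Set.Icc 1 (b - 1)) ∪ ((fun j => j * b) '' Set.Icc 1 a) ∧
    (aperySet (AddSubmonoid.closure {a, b}) (a + b)).ncard = a + b := by
  have hb : 0 < b := ha.trans hab
  have hmem : ∀ x : ℕ, x ∈ AddSubmonoid.closure ({a, b} : Set ℕ) ↔
      ∃ m n : ℕ, m * a + n * b = x := by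
    intro x
    rw [AddSubmonoid.mem_closure_pair]
    simp [smul_eq_mul]
  have hap : ∀ s, s ∈ aperySet (AddSubmonoid.closure ({a, b} : Set ℕ)) (a + b) ↔
      (∃ m n : ℕ, m * a + n * b = s) ∧ ¬ ∃ m n : ℕ, (m+1) * a + (n+1) * b = s := by
    intro s
    simp only [aperySet, Set.mem_setOf_eq, hmem]
    constructor
    · rintro ⟨h1, h2⟩
      refine ⟨h1, ?_⟩
      rintro ⟨m, n, h⟩
      exact h2 ⟨m * a + n * b, ⟨m, n, rfl⟩, by linear_combination h⟩
    · rintro ⟨h1, h2⟩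
      refine ⟨h1, ?_⟩
      rintro ⟨t, ⟨m, n, rfl⟩, h⟩
      exact h2 ⟨m, n, by linear_combination h⟩
  -- the set equality
  have hEq : aperySet (AddSubmonoid.closure ({a, b} : Set ℕ)) (a + b) =
      {0} ∪ ((fun i => i * a) '' Set.Icc 1 (b - 1)) ∪ ((fun j => j * b) '' Set.Icc 1 a) := by
    ext s
    rw [hap]
    simp only [Set.mem_union, Set.mem_singleton_iff, Set.mem_image, Set.mem_Icc]
    constructor
    · rintro ⟨⟨m, n, rfl⟩, h2⟩
      rcases Nat.eq_zero_or_pos m with hm | hm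
      · subst hm
        rcases Nat.eq_zero_or_pos n with hn | hn
        · subst hn; left; left; simp
        · -- s = n*b, n ≥ 1
          rcases le_or_gt n a with hna | hna
          · right; exact ⟨n, ⟨hn, hna⟩, by simp⟩
          · exfalso
            obtain ⟨k, rfl⟩ : ∃ k, n = a + 1 + k := ⟨n - a - 1, by omega⟩
            obtain ⟨b', rfl⟩ : ∃ b', b = b' + 1 := ⟨b - 1, by omega⟩
            exact h2 ⟨b', k, by ring⟩
      · rcases Nat.eq_zero_or_pos n with hn | hn
        swap
        · exfalso
          obtain ⟨m', rfl⟩ : ∃ m', m = m' + 1 := ⟨m - 1, by omega⟩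
          obtain ⟨n', rfl⟩ : ∃ n', n = n' + 1 := ⟨n - 1, by omega⟩
          exact h2 ⟨m', n', rfl⟩
        · subst hn
          -- s = m*a, m ≥ 1
          rcases lt_or_ge m b with hmb | hmb
          · left; right; exact ⟨m, ⟨hm, by omega⟩, by simp⟩
          · rcases eq_or_lt_of_le hmb with hm2 | hm2
            · right; exact ⟨a, ⟨ha, le_refl a⟩, by rw [← hm2]; ring⟩
            · exfalso
              obtain ⟨k, rfl⟩ : ∃ k, m = b + 1 + k := ⟨m - b - 1, by omega⟩
              obtain ⟨a', rfl⟩ : ∃ a', a = a' + 1 := ⟨a - 1, by omega⟩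
              exact h2 ⟨k, a', by ring⟩
    · rintro ((rfl | ⟨i, ⟨hi1, hi2⟩, rfl⟩) | ⟨j, ⟨hj1, hj2⟩, rfl⟩)
      · refine ⟨⟨0, 0, by simp⟩, ?_⟩
        rintro ⟨m, n, h⟩
        simp only [Nat.add_eq_zero, Nat.mul_eq_zero] at h
        omega
      · refine ⟨⟨i, 0, by simp⟩, ?_⟩
        rintro ⟨m, n, heq⟩
        have hle : (m+1)*a ≤ i*a := le_of_add_le_left heq.le
        have hmi : m + 1 ≤ i := Nat.le_of_mul_le_mul_right hle ha
        have hdvd : a ∣ (n+1) * b :=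
          ⟨i - (m+1), by rw [Nat.eq_sub_of_add_eq' heq, ← Nat.sub_mul, mul_comm]⟩
        have hna : a ≤ n + 1 := Nat.le_of_dvd (by omega) (hgcd.dvd_of_dvd_mul_right hdvd)
        have e1 : a * b ≤ (n+1) * b := Nat.mul_le_mul_right _ hna
        have e2 : a ≤ (m+1) * a := Nat.le_mul_of_pos_left a (by omega)
        have e3 : (i+1) * a ≤ b * a := Nat.mul_le_mul_right _ (by omega)
        nlinarith [heq]
      · refine ⟨⟨0, j, by simp⟩, ?_⟩
        rintro ⟨m, n, heq⟩
        have hle : (n+1)*b ≤ j*b := le_of_add_le_right heq.le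
        have hnj : n + 1 ≤ j := Nat.le_of_mul_le_mul_right hle hb
        have hdvd : b ∣ (m+1) * a :=
          ⟨j - (n+1), by rw [Nat.eq_sub_of_add_eq heq, ← Nat.sub_mul, mul_comm]⟩
        have hmb : b ≤ m + 1 := Nat.le_of_dvd (by omega) (hgcd.symm.dvd_of_dvd_mul_right hdvd)
        have e1 : b * a ≤ (m+1) * a := Nat.mul_le_mul_right _ hmb
        have e2 : b ≤ (n+1) * b := Nat.le_mul_of_pos_left b (by omega)
        have e3 : j * b ≤ a * b := Nat.mul_le_mul_right _ hj2
        nlinarith [heq]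
  refine ⟨hEq, ?_⟩
  rw [hEq]
  have hFin : ({0} ∪ ((fun i => i * a) '' Set.Icc 1 (b - 1)) ∪ ((fun j => j * b) '' Set.Icc 1 a) : Set ℕ)
      = (({0} ∪ (Finset.Icc 1 (b-1)).image (fun i => i * a) ∪ (Finset.Icc 1 a).image (fun j => j * b) : Finset ℕ) : Set ℕ) := by
    simp [Finset.coe_union, Finset.coe_image, Finset.coe_Icc, Set.insert_union]
  rw [hFin, Set.ncard_coe_finset]
  have hinjA : Function.Injective (fun i : ℕ => i * a) :=
    fun x y h => Nat.eq_of_mul_eq_mul_right ha h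
  have hinjB : Function.Injective (fun j : ℕ => j * b) :=
    fun x y h => Nat.eq_of_mul_eq_mul_right hb h
  have hd1 : Disjoint ({0} : Finset ℕ) ((Finset.Icc 1 (b-1)).image (fun i => i * a)) := by
    simp only [Finset.disjoint_left, Finset.mem_singleton, Finset.mem_image, Finset.mem_Icc]
    rintro x rfl ⟨i, ⟨hi1, _⟩, hi⟩
    have := Nat.mul_pos hi1 ha
    omega
  have hd2 : Disjoint (({0} : Finset ℕ) ∪ (Finset.Icc 1 (b-1)).image (fun i => i * a))
      ((Finset.Icc 1 a).image (fun j => j * b)) := by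
    simp only [Finset.disjoint_left, Finset.mem_union, Finset.mem_singleton, Finset.mem_image,
      Finset.mem_Icc]
    rintro x (rfl | ⟨i, ⟨hi1, hi2⟩, rfl⟩) ⟨j, ⟨hj1, hj2⟩, hj⟩
    · have := Nat.mul_pos hj1 hb; omega
    · have hdvd : b ∣ i * a := ⟨j, by rw [← hj, mul_comm]⟩
      have := Nat.le_of_dvd hi1 (hgcd.symm.dvd_of_dvd_mul_right hdvd)
      omega
  rw [Finset.card_union_of_disjoint hd2, Finset.card_union_of_disjoint hd1,
    Finset.card_image_of_injective _ hinjA, Finset.card_image_of_injective _ hinjB,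
    Finset.card_singleton, Nat.card_Icc, Nat.card_Icc]
  omega
end
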